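/- arXiv:0804.0542 — 6 statements merged into one kernel-verified Lean document; each statement's English description precedes it below -/
import Mathlib

section
/- There exists a constant C > 0, depending only on K, γ₁, γ₂ and r, such that for every t₀ > 0, every M_f > 0, and every continuous f : [t₀,∞) → ℝᴺ with ‖f(t)‖ ≤ M_f·e^{−t} for all t ≥ t₀, the function y(t) := ∫_{t₀}^{t} e^{𝒜(t−s)}(P₂+P₃)f(s) ds − ∫_{t}^{∞} e^{𝒜(t−s)}P₁ f(s) ds is well defined (the improper integral converges absolutely), solves y′(t) = 𝒜y(t) + f(t) for all t ≥ t₀, and satisfies ‖y(t)‖ ≤ C·M_f·e^{−t}(1 + (t−t₀)^r) for all t ≥ t₀. -/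
/-!
Write `U(t) = e^{t𝒜}`. Since `P₂ + P₃ + P₁ = 1`, splitting `∫_{t₀}^∞ = ∫_{t₀}^t + ∫_t^∞` shows that
the Green integral equals `U(t) (∫_{t₀}^t U(-s) f(s) ds - c)` with the constant
`c = ∫_{t₀}^∞ U(-s) P₁ f(s) ds`, so it solves `y' = 𝒜 y + f` by variation of constants.
For the bound, the `P₁` integrand is at most `K M e^{γ₁ t} e^{-(1+γ₁) s}`, integrable on `(t, ∞)`
because `γ₁ > -1`, which gives `O(e^{-t})`; on `(t₀, t]` the `P₂` and `P₃` integrands are at most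
`K M e^{-t} (2 + (t-s)^{r-1})` (using `γ₂ < -1`), whose integral is `O(e^{-t} (1 + (t-t₀)^r))`.
-/

open MeasureTheory Set Filter
open scoped Topology

open NormedSpace

section Semigroup

variable {E : Type*} [NormedAddCommGroup E] [NormedSpace ℝ E] [CompleteSpace E] (𝒜 : E →L[ℝ] E)

theorem exp_add_smul_apply (a b : ℝ) (x : E) :
    exp ((a + b) • 𝒜) x = exp (a • 𝒜) (exp (b • 𝒜) x) := by
  let : NormedAlgebra ℚ (E →L[ℝ] E) := .restrictScalars ℚ ℝ _
  rw [add_smul, exp_add_of_commute (((Commute.refl 𝒜).smul_left a).smul_right b)]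
  rfl

theorem exp_sub_smul_apply (a b : ℝ) (x : E) :
    exp ((a - b) • 𝒜) x = exp (a • 𝒜) (exp ((-b) • 𝒜) x) := by
  rw [sub_eq_add_neg, exp_add_smul_apply]

theorem exp_smul_apply_exp_neg_smul_apply (a : ℝ) (x : E) :
    exp (a • 𝒜) (exp ((-a) • 𝒜) x) = x := by
  rw [← exp_sub_smul_apply, sub_self, zero_smul, exp_zero]
  rfl

theorem continuous_exp_smul : Continuous fun t : ℝ => exp (t • 𝒜) :=
  (differentiable_exp_smul_const ℝ 𝒜).continuous

theorem IntegrableOn.exp_neg_smul_apply {g : ℝ → E} {t : ℝ} {S : Set ℝ}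
    (h : IntegrableOn (fun s => exp ((t - s) • 𝒜) (g s)) S) :
    IntegrableOn (fun s => exp ((-s) • 𝒜) (g s)) S := by
  have hshift (s : ℝ) : exp ((-s) • 𝒜) (g s) = exp ((-t) • 𝒜) (exp ((t - s) • 𝒜) (g s)) := by
    rw [← exp_add_smul_apply, ← add_sub_assoc, neg_add_cancel, zero_sub]
  simp_rw [hshift]
  exact (exp ((-t) • 𝒜)).integrable_comp h

noncomputable def greenIntegral (Q P : E →L[ℝ] E) (f : ℝ → E) (t₀ t : ℝ) : E :=
  (∫ s in Ioc t₀ t, exp ((t - s) • 𝒜) (Q (f s))) - ∫ s in Ioi t, exp ((t - s) • 𝒜) (P (f s))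

theorem hasDerivWithinAt_exp_smul_apply_integral_sub {g : ℝ → E} {t₀ t : ℝ} (c : E)
    (hg : ContinuousOn g (Ici t₀)) (ht : t₀ ≤ t) :
    HasDerivWithinAt (fun u => exp (u • 𝒜) ((∫ s in t₀..u, exp ((-s) • 𝒜) (g s)) - c))
      (𝒜 (exp (t • 𝒜) ((∫ s in t₀..t, exp ((-s) • 𝒜) (g s)) - c)) + g t) (Ici t₀) t := by
  have hcont : ContinuousOn (fun s => exp ((-s) • 𝒜) (g s)) (Icc t₀ (t + 1)) :=
    (((continuous_exp_smul 𝒜).comp continuous_neg).continuousOn.clm_apply hg).mono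
      Icc_subset_Ici_self
  have : Fact (t ∈ Icc t₀ (t + 1)) := ⟨⟨ht, by linarith⟩⟩
  have hFTC : HasDerivWithinAt (fun u => ∫ s in t₀..u, exp ((-s) • 𝒜) (g s))
      (exp ((-t) • 𝒜) (g t)) (Icc t₀ (t + 1)) t :=
    intervalIntegral.integral_hasDerivWithinAt_right
      ((hcont.mono (Icc_subset_Icc_right (by linarith))).intervalIntegrable_of_Icc ht)
      (hcont.stronglyMeasurableAtFilter_nhdsWithin measurableSet_Icc t) (hcont t this.out)
  have hIcc : Icc t₀ (t + 1) ∈ 𝓝[Ici t₀] t := by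
    rw [← Ici_inter_Iic]
    exact inter_mem_nhdsWithin _ (Iic_mem_nhds (lt_add_one t))
  convert (hasDerivAt_exp_smul_const' 𝒜 t).hasDerivWithinAt.clm_apply
    ((hFTC.mono_of_mem_nhdsWithin hIcc).sub_const c) using 1
  rw [exp_smul_apply_exp_neg_smul_apply]
  rfl

theorem greenIntegral_eq {Q P : E →L[ℝ] E} (hQP : Q + P = 1) {f : ℝ → E} {t₀ u : ℝ}
    (hf : ContinuousOn f (Ici t₀))
    (hP : IntegrableOn (fun s => exp ((-s) • 𝒜) (P (f s))) (Ioi t₀)) (hu : t₀ ≤ u) :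
    greenIntegral 𝒜 Q P f t₀ u = exp (u • 𝒜)
      ((∫ s in t₀..u, exp ((-s) • 𝒜) (f s)) - ∫ s in Ioi t₀, exp ((-s) • 𝒜) (P (f s))) := by
  have hloc (R : E →L[ℝ] E) :
      IntegrableOn (fun s => exp ((-s) • 𝒜) (R (f s))) (Ioc t₀ u) :=
    ((((continuous_exp_smul 𝒜).comp continuous_neg).continuousOn.clm_apply
      (R.continuous.comp_continuousOn hf)).mono Icc_subset_Ici_self).integrableOn_Icc.mono_set
      Ioc_subset_Icc_self
  have hPu := hP.mono_set (Ioi_subset_Ioi hu)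
  have hsplit := setIntegral_union (Ioc_disjoint_Ioi le_rfl) measurableSet_Ioi (hloc P) hPu
  rw [Ioc_union_Ioi_eq_Ioi hu] at hsplit
  have hQP_apply (s : ℝ) :
      exp ((-s) • 𝒜) (Q (f s)) + exp ((-s) • 𝒜) (P (f s)) = exp ((-s) • 𝒜) (f s) := by
    rw [← map_add, ← add_apply, hQP]
    rfl
  simp_rw [greenIntegral, exp_sub_smul_apply]
  rw [(exp (u • 𝒜)).integral_comp_comm (hloc Q), (exp (u • 𝒜)).integral_comp_comm hPu,
    ← map_sub, intervalIntegral.integral_of_le hu, hsplit]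
  simp_rw [← hQP_apply]
  rw [integral_add (hloc Q) (hloc P)]
  abel_nf

theorem hasDerivWithinAt_greenIntegral {Q P : E →L[ℝ] E} (hQP : Q + P = 1) {f : ℝ → E}
    {t₀ t : ℝ} (hf : ContinuousOn f (Ici t₀))
    (hP : IntegrableOn (fun s => exp ((-s) • 𝒜) (P (f s))) (Ioi t₀)) (ht : t₀ ≤ t) :
    HasDerivWithinAt (greenIntegral 𝒜 Q P f t₀) (𝒜 (greenIntegral 𝒜 Q P f t₀ t) + f t)
      (Ici t₀) t := by
  have heq (u : ℝ) (hu : u ∈ Ici t₀) := greenIntegral_eq 𝒜 hQP hf hP hu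
  rw [heq t ht]
  exact (hasDerivWithinAt_exp_smul_apply_integral_sub 𝒜 _ hf ht).congr heq (heq t ht)

end Semigroup

theorem integral_sub_rpow_sub_one {r : ℝ} (hr : 0 < r) (a t : ℝ) :
    ∫ s in a..t, (t - s) ^ (r - 1) = (t - a) ^ r / r := by
  rw [intervalIntegral.integral_comp_sub_left (fun x => x ^ (r - 1)), sub_self,
    integral_rpow (Or.inl (by linarith)), sub_add_cancel, Real.zero_rpow hr.ne', sub_zero]

theorem intervalIntegrable_sub_rpow_sub_one {r : ℝ} (hr : 0 < r) (a t : ℝ) :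
    IntervalIntegrable (fun s => (t - s) ^ (r - 1)) volume a t := by
  simpa using (intervalIntegral.intervalIntegrable_rpow' (a := 0) (b := t - a)
    (by linarith : -1 < r - 1)).comp_sub_left t |>.symm

theorem le_one_add_rpow {τ r : ℝ} (hτ : 0 ≤ τ) (hr : 1 ≤ r) : τ ≤ 1 + τ ^ r := by
  rcases le_or_gt τ 1 with h | h
  · linarith [Real.rpow_nonneg hτ r]
  · calc τ = τ ^ (1 : ℝ) := (Real.rpow_one τ).symm
      _ ≤ τ ^ r := Real.rpow_le_rpow_of_exponent_le h.le hr
      _ ≤ 1 + τ ^ r := by linarith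

section Dichotomy

variable {E : Type*} [NormedAddCommGroup E] [NormedSpace ℝ E]
  {𝒜 P₁ P₂ P₃ : E →L[ℝ] E} {f : ℝ → E} {K M γ r t₀ t : ℝ}

theorem norm_exp_sub_smul_apply_le_of_unstable
    (hP₁ : ∀ τ ≤ (0 : ℝ), ‖exp (τ • 𝒜) ∘L P₁‖ ≤ K * Real.exp (γ * τ))
    (hf : ∀ s ≥ t₀, ‖f s‖ ≤ M * Real.exp (-s)) (ht : t₀ ≤ t) {s : ℝ} (hs : t < s) :
    ‖exp ((t - s) • 𝒜) (P₁ (f s))‖ ≤ K * M * Real.exp (γ * t) * Real.exp (-(1 + γ) * s) := by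
  calc ‖exp ((t - s) • 𝒜) (P₁ (f s))‖
      ≤ K * Real.exp (γ * (t - s)) * (M * Real.exp (-s)) :=
        (exp ((t - s) • 𝒜) ∘L P₁).le_of_opNorm_le_of_le (hP₁ _ (by linarith)) (hf s (by linarith))
    _ = K * M * Real.exp (γ * t) * Real.exp (-(1 + γ) * s) := by
        have hexp : Real.exp (γ * (t - s)) * Real.exp (-s)
            = Real.exp (γ * t) * Real.exp (-(1 + γ) * s) := by
          rw [← Real.exp_add, ← Real.exp_add]
          ring_nf
        linear_combination K * M * hexp

theorem integrableOn_exp_sub_smul_apply_of_unstable [CompleteSpace E] (hγ : -1 < γ)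
    (hP₁ : ∀ τ ≤ (0 : ℝ), ‖exp (τ • 𝒜) ∘L P₁‖ ≤ K * Real.exp (γ * τ))
    (hf_cont : ContinuousOn f (Ici t₀)) (hf : ∀ s ≥ t₀, ‖f s‖ ≤ M * Real.exp (-s))
    (ht : t₀ ≤ t) :
    IntegrableOn (fun s => exp ((t - s) • 𝒜) (P₁ (f s))) (Ioi t) := by
  have hcont : ContinuousOn (fun s => exp ((t - s) • 𝒜) (P₁ (f s))) (Ioi t) :=
    ((continuous_exp_smul 𝒜).comp (continuous_sub_left t)).continuousOn.clm_apply
      (P₁.continuous.comp_continuousOn (hf_cont.mono fun s hs => ht.trans (le_of_lt hs)))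
  refine Integrable.mono' (((exp_neg_integrableOn_Ioi t (by linarith : 0 < 1 + γ))).const_mul
    (K * M * Real.exp (γ * t))) (hcont.aestronglyMeasurable measurableSet_Ioi) ?_
  exact (ae_restrict_iff' measurableSet_Ioi).2
    (ae_of_all _ fun s hs => norm_exp_sub_smul_apply_le_of_unstable hP₁ hf ht hs)

theorem norm_integral_exp_sub_smul_apply_le_of_unstable (hγ : -1 < γ)
    (hP₁ : ∀ τ ≤ (0 : ℝ), ‖exp (τ • 𝒜) ∘L P₁‖ ≤ K * Real.exp (γ * τ))
    (hf : ∀ s ≥ t₀, ‖f s‖ ≤ M * Real.exp (-s)) (ht : t₀ ≤ t) :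
    ‖∫ s in Ioi t, exp ((t - s) • 𝒜) (P₁ (f s))‖ ≤ K / (1 + γ) * M * Real.exp (-t) := by
  have hγ' : 0 < 1 + γ := by linarith
  calc ‖∫ s in Ioi t, exp ((t - s) • 𝒜) (P₁ (f s))‖
      ≤ ∫ s in Ioi t, K * M * Real.exp (γ * t) * Real.exp (-(1 + γ) * s) :=
        norm_integral_le_of_norm_le ((exp_neg_integrableOn_Ioi t hγ').const_mul _)
          ((ae_restrict_iff' measurableSet_Ioi).2
            (ae_of_all _ fun s hs => norm_exp_sub_smul_apply_le_of_unstable hP₁ hf ht hs))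
    _ = K * M * Real.exp (γ * t) * (Real.exp (-(1 + γ) * t) / (1 + γ)) := by
        rw [integral_const_mul, integral_exp_mul_Ioi (by linarith), neg_div_neg_eq]
    _ = K / (1 + γ) * M * Real.exp (-t) := by
        rw [mul_div_assoc', mul_assoc _ (Real.exp _), ← Real.exp_add]
        field_simp
        ring_nf

theorem norm_exp_sub_smul_apply_le_of_stable (hK : 0 ≤ K) (hγ : γ ≤ -1)
    (hP₂ : ∀ τ ≥ (0 : ℝ), ‖exp (τ • 𝒜) ∘L P₂‖ ≤ K * (1 + τ ^ (r - 1)) * Real.exp (-τ))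
    (hP₃ : ∀ τ ≥ (0 : ℝ), ‖exp (τ • 𝒜) ∘L P₃‖ ≤ K * Real.exp (γ * τ))
    (hf : ∀ s ≥ t₀, ‖f s‖ ≤ M * Real.exp (-s)) {s : ℝ} (hs : s ∈ Ioc t₀ t) :
    ‖exp ((t - s) • 𝒜) ((P₂ + P₃) (f s))‖
      ≤ K * M * Real.exp (-t) * (2 + (t - s) ^ (r - 1)) := by
  have hτ : 0 ≤ t - s := sub_nonneg.2 hs.2
  have hfs := hf s hs.1.le
  have hM : 0 ≤ M * Real.exp (-s) := (norm_nonneg _).trans hfs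
  have h₂ := (exp ((t - s) • 𝒜) ∘L P₂).le_of_opNorm_le_of_le (hP₂ _ hτ) hfs
  have h₃ := (exp ((t - s) • 𝒜) ∘L P₃).le_of_opNorm_le_of_le (hP₃ _ hτ) hfs
  have hγτ : Real.exp (γ * (t - s)) ≤ Real.exp (-(t - s)) :=
    Real.exp_le_exp.2 (by nlinarith)
  have hexp : Real.exp (-(t - s)) * Real.exp (-s) = Real.exp (-t) := by
    rw [← Real.exp_add]
    ring_nf
  calc ‖exp ((t - s) • 𝒜) ((P₂ + P₃) (f s))‖
      ≤ ‖(exp ((t - s) • 𝒜) ∘L P₂) (f s)‖ + ‖(exp ((t - s) • 𝒜) ∘L P₃) (f s)‖ := by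
        rw [add_apply, map_add]
        exact norm_add_le _ _
    _ ≤ K * (1 + (t - s) ^ (r - 1)) * Real.exp (-(t - s)) * (M * Real.exp (-s))
        + K * Real.exp (-(t - s)) * (M * Real.exp (-s)) := by
        gcongr
        exact h₃.trans (by gcongr)
    _ = K * M * Real.exp (-t) * (2 + (t - s) ^ (r - 1)) := by
        linear_combination K * M * (2 + (t - s) ^ (r - 1)) * hexp

theorem norm_integral_exp_sub_smul_apply_le_of_stable (hK : 0 ≤ K) (hγ : γ ≤ -1) (hr : 0 < r)
    (hP₂ : ∀ τ ≥ (0 : ℝ), ‖exp (τ • 𝒜) ∘L P₂‖ ≤ K * (1 + τ ^ (r - 1)) * Real.exp (-τ))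
    (hP₃ : ∀ τ ≥ (0 : ℝ), ‖exp (τ • 𝒜) ∘L P₃‖ ≤ K * Real.exp (γ * τ))
    (hf : ∀ s ≥ t₀, ‖f s‖ ≤ M * Real.exp (-s)) (ht : t₀ ≤ t) :
    ‖∫ s in Ioc t₀ t, exp ((t - s) • 𝒜) ((P₂ + P₃) (f s))‖
      ≤ K * M * Real.exp (-t) * (2 * (t - t₀) + (t - t₀) ^ r / r) := by
  have hint : IntervalIntegrable (fun s => 2 + (t - s) ^ (r - 1)) volume t₀ t :=
    intervalIntegrable_const.add (intervalIntegrable_sub_rpow_sub_one hr t₀ t)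
  calc ‖∫ s in Ioc t₀ t, exp ((t - s) • 𝒜) ((P₂ + P₃) (f s))‖
      ≤ ∫ s in Ioc t₀ t, K * M * Real.exp (-t) * (2 + (t - s) ^ (r - 1)) :=
        norm_integral_le_of_norm_le ((hint.1).const_mul _)
          ((ae_restrict_iff' measurableSet_Ioc).2
            (ae_of_all _ fun s hs => norm_exp_sub_smul_apply_le_of_stable hK hγ hP₂ hP₃ hf hs))
    _ = K * M * Real.exp (-t) * (2 * (t - t₀) + (t - t₀) ^ r / r) := by
        rw [← intervalIntegral.integral_of_le ht, intervalIntegral.integral_const_mul,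
          intervalIntegral.integral_add intervalIntegrable_const
            (intervalIntegrable_sub_rpow_sub_one hr t₀ t),
          integral_sub_rpow_sub_one hr, intervalIntegral.integral_const, smul_eq_mul, mul_comm 2]

theorem norm_greenIntegral_le (hK : 0 ≤ K) (hr : 1 ≤ r) {γ₁ γ₂ : ℝ} (hγ₁ : -1 < γ₁)
    (hγ₂ : γ₂ ≤ -1) (hP₁ : ∀ τ ≤ (0 : ℝ), ‖exp (τ • 𝒜) ∘L P₁‖ ≤ K * Real.exp (γ₁ * τ))
    (hP₂ : ∀ τ ≥ (0 : ℝ), ‖exp (τ • 𝒜) ∘L P₂‖ ≤ K * (1 + τ ^ (r - 1)) * Real.exp (-τ))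
    (hP₃ : ∀ τ ≥ (0 : ℝ), ‖exp (τ • 𝒜) ∘L P₃‖ ≤ K * Real.exp (γ₂ * τ))
    (hf : ∀ s ≥ t₀, ‖f s‖ ≤ M * Real.exp (-s)) (ht : t₀ ≤ t) :
    ‖greenIntegral 𝒜 (P₂ + P₃) P₁ f t₀ t‖
      ≤ (2 * K + K / r + K / (1 + γ₁)) * M * Real.exp (-t) * (1 + (t - t₀) ^ r) := by
  have hτ : 0 ≤ t - t₀ := sub_nonneg.2 ht
  have hr₀ : 0 < r := by linarith
  have hMe : 0 ≤ M * Real.exp (-t) := (norm_nonneg _).trans (hf t ht)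
  have hstable := norm_integral_exp_sub_smul_apply_le_of_stable hK hγ₂ hr₀ hP₂ hP₃ hf ht
  have hunstable := norm_integral_exp_sub_smul_apply_le_of_unstable hγ₁ hP₁ hf ht
  have hpoly : 2 * K * (t - t₀) + K / r * (t - t₀) ^ r + K / (1 + γ₁)
      ≤ (2 * K + K / r + K / (1 + γ₁)) * (1 + (t - t₀) ^ r) := by
    have h₁ := le_one_add_rpow hτ hr
    have h₂ : 0 ≤ (t - t₀) ^ r := Real.rpow_nonneg hτ r
    have h₃ : 0 ≤ K / r := by positivity
    have h₄ : 0 < 1 + γ₁ := by linarith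
    have h₅ : 0 ≤ K / (1 + γ₁) := by positivity
    nlinarith
  calc ‖greenIntegral 𝒜 (P₂ + P₃) P₁ f t₀ t‖
      ≤ K * M * Real.exp (-t) * (2 * (t - t₀) + (t - t₀) ^ r / r)
        + K / (1 + γ₁) * M * Real.exp (-t) := (norm_sub_le _ _).trans (add_le_add hstable hunstable)
    _ = M * Real.exp (-t) * (2 * K * (t - t₀) + K / r * (t - t₀) ^ r + K / (1 + γ₁)) := by ring
    _ ≤ M * Real.exp (-t) * ((2 * K + K / r + K / (1 + γ₁)) * (1 + (t - t₀) ^ r)) := by gcongr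
    _ = (2 * K + K / r + K / (1 + γ₁)) * M * Real.exp (-t) * (1 + (t - t₀) ^ r) := by ring

end Dichotomy

/-- existence of a constant `C`, depending only on `K, γ₁, γ₂, r`, such that
the Green-type integral `y(t) = ∫_{t₀}^t e^{𝒜(t-s)}(P₂+P₃) f(s) ds − ∫_t^∞ e^{𝒜(t-s)} P₁ f(s) ds`
is well defined, solves `y' = 𝒜 y + f`, and satisfies `‖y(t)‖ ≤ C M_f e^{-t} (1 + (t-t₀)^r)`. -/
theorem green_bounded_solution (K r γ₁ γ₂ : ℝ)
    (hK : 0 < K) (hr : 1 ≤ r) (hγ₁ : -1 < γ₁) (hγ₂ : γ₂ < -1) :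
    ∃ C > (0 : ℝ), ∀ (N : ℕ), 1 ≤ N →
      ∀ (𝒜 P₁ P₂ P₃ : EuclideanSpace ℝ (Fin N) →L[ℝ] EuclideanSpace ℝ (Fin N)),
      P₁ ∘L P₁ = P₁ → P₂ ∘L P₂ = P₂ → P₃ ∘L P₃ = P₃ →
      P₁ + P₂ + P₃ = 1 →
      P₁ ∘L P₂ = 0 → P₂ ∘L P₁ = 0 → P₁ ∘L P₃ = 0 →
      P₃ ∘L P₁ = 0 → P₂ ∘L P₃ = 0 → P₃ ∘L P₂ = 0 →
      (∀ τ ≤ (0 : ℝ), ‖NormedSpace.exp (τ • 𝒜) ∘L P₁‖ ≤ K * Real.exp (γ₁ * τ)) →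
      (∀ τ ≥ (0 : ℝ), ‖NormedSpace.exp (τ • 𝒜) ∘L P₂‖ ≤ K * (1 + τ ^ (r - 1)) * Real.exp (-τ)) →
      (∀ τ ≥ (0 : ℝ), ‖NormedSpace.exp (τ • 𝒜) ∘L P₃‖ ≤ K * Real.exp (γ₂ * τ)) →
      ∀ t₀ > (0 : ℝ), ∀ M_f > (0 : ℝ), ∀ f : ℝ → EuclideanSpace ℝ (Fin N),
        ContinuousOn f (Set.Ici t₀) →
        (∀ t ≥ t₀, ‖f t‖ ≤ M_f * Real.exp (-t)) →
        -- the improper integral converges absolutely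
        (∀ t ≥ t₀, IntegrableOn
            (fun s => NormedSpace.exp ((t - s) • 𝒜) (P₁ (f s))) (Set.Ioi t)) ∧
        -- y solves y' = 𝒜 y + f on [t₀, ∞)
        (∀ t ∈ Set.Ici t₀,
          HasDerivWithinAt
            (fun u => (∫ s in Set.Ioc t₀ u, NormedSpace.exp ((u - s) • 𝒜) ((P₂ + P₃) (f s)))
              - ∫ s in Set.Ioi u, NormedSpace.exp ((u - s) • 𝒜) (P₁ (f s)))
            (𝒜 ((∫ s in Set.Ioc t₀ t, NormedSpace.exp ((t - s) • 𝒜) ((P₂ + P₃) (f s)))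
                - ∫ s in Set.Ioi t, NormedSpace.exp ((t - s) • 𝒜) (P₁ (f s))) + f t)
            (Set.Ici t₀) t) ∧
        -- the exponential bound
        (∀ t ≥ t₀,
          ‖(∫ s in Set.Ioc t₀ t, NormedSpace.exp ((t - s) • 𝒜) ((P₂ + P₃) (f s)))
              - ∫ s in Set.Ioi t, NormedSpace.exp ((t - s) • 𝒜) (P₁ (f s))‖
            ≤ C * M_f * Real.exp (-t) * (1 + (t - t₀) ^ r)) := by
  have hC : 0 < 2 * K + K / r + K / (1 + γ₁) :=
    add_pos (add_pos (by positivity) (div_pos hK (by linarith))) (div_pos hK (by linarith))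
  refine ⟨_, hC, ?_⟩
  intro N _ 𝒜 P₁ P₂ P₃ _ _ _ hsum _ _ _ _ _ _ hP₁ hP₂ hP₃ t₀ _ M_f _ f hf_cont hf
  have hQP : (P₂ + P₃) + P₁ = 1 := by rw [← hsum]; abel
  have hint (t : ℝ) (ht : t ≥ t₀) :=
    integrableOn_exp_sub_smul_apply_of_unstable hγ₁ hP₁ hf_cont hf ht
  refine ⟨hint, fun t ht => ?_, fun t ht => ?_⟩
  · exact hasDerivWithinAt_greenIntegral 𝒜 hQP hf_cont
      (IntegrableOn.exp_neg_smul_apply 𝒜 (hint t₀ le_rfl)) ht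
  · exact norm_greenIntegral_le hK.le hr hγ₁ hγ₂.le hP₁ hP₂ hP₃ hf ht
end

section
/- If, in addition to the hypotheses above, the function f satisfies e^{t}·f(t) → 0 as t → ∞ (i.e., f(t) = o(e^{−t})), then the solution y(t) := ∫_{t₀}^{t} e^{𝒜(t−s)}(P₂+P₃)f(s) ds − ∫_{t}^{∞} e^{𝒜(t−s)}P₁ f(s) ds satisfies e^{t}·t^{−r}·y(t) → 0 as t → ∞ (i.e., y(t) = o(t^r e^{−t})). -/
open MeasureTheory Set Filter
open scoped Topology

/-!
Write `g(s) = eˢ f(s)`, so that `g → 0`. For `t₀ < s ≤ t` the bounds on `P₂` and `P₃` give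
`‖e^{𝒜(t-s)}(P₂+P₃) f(s)‖ ≤ K (2 + t^{r-1}) e^{-t} ‖g(s)‖`; hence `eᵗ t^{-r}` times the first
integral is at most `3K · t⁻¹ ∫_{t₀}^t ‖g‖`, a Cesàro mean of a function tending to `0`.
For `s > t`, `‖e^{𝒜(t-s)} P₁ f(s)‖ ≤ K e^{γ₁ t} e^{-(1+γ₁) s} sup_{s > t} ‖g‖`, which integrates
(as `γ₁ > -1`) to `K e^{-t} sup_{s > t} ‖g‖ / (1 + γ₁) = o(e^{-t})`.
-/

theorem integral_Ioc_isLittleO_id_of_tendsto_zero {E : Type*} [NormedAddCommGroup E]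
    [NormedSpace ℝ E] {g : ℝ → E} {a : ℝ} (hg : ∀ b, IntegrableOn g (Ioc a b))
    (hlim : Tendsto g atTop (𝓝 0)) :
    (fun t => ∫ s in Ioc a t, g s) =o[atTop] id := by
  refine Asymptotics.isLittleO_iff.2 fun c hc => ?_
  obtain ⟨T, hT⟩ :=
    eventually_atTop.1 (NormedAddGroup.tendsto_nhds_zero.1 hlim (c / 2) (half_pos hc))
  set T' := max a (max T 0)
  have haT' : a ≤ T' := le_max_left _ _
  have hTT' : T ≤ T' := (le_max_left _ _).trans (le_max_right _ _)
  have hT'0 : 0 ≤ T' := (le_max_right _ _).trans (le_max_right _ _)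
  set C := ‖∫ s in Ioc a T', g s‖
  filter_upwards [eventually_ge_atTop T', eventually_ge_atTop (2 * C / c)] with t hT't hCt
  have hsplit : ∫ s in Ioc a t, g s = (∫ s in Ioc a T', g s) + ∫ s in Ioc T' t, g s := by
    rw [← Ioc_union_Ioc_eq_Ioc haT' hT't, setIntegral_union (Ioc_disjoint_Ioc_of_le le_rfl)
      measurableSet_Ioc (hg T') ((hg t).mono_set (Ioc_subset_Ioc_left haT'))]
  have htail : ‖∫ s in Ioc T' t, g s‖ ≤ c / 2 * (t - T') := by
    have h := norm_setIntegral_le_of_norm_le_const (μ := volume) (s := Ioc T' t)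
      measure_Ioc_lt_top fun s hs => (hT s (hTT'.trans hs.1.le)).le
    rwa [Real.volume_real_Ioc_of_le hT't] at h
  have hC : 2 * C ≤ c * t := (div_le_iff₀ hc).1 hCt |>.trans_eq (mul_comm _ _)
  calc ‖∫ s in Ioc a t, g s‖ ≤ C + c / 2 * (t - T') :=
        hsplit ▸ (norm_add_le _ _).trans (add_le_add_right htail _)
    _ ≤ c * ‖id t‖ := by
      rw [id, Real.norm_of_nonneg (hT'0.trans hT't)]
      nlinarith

theorem rpow_neg_mul_two_add_rpow_sub_one_le {r t : ℝ} (hr : 1 ≤ r) (ht : 1 ≤ t) :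
    t ^ (-r) * (2 + t ^ (r - 1)) ≤ 3 / t := by
  have ht0 : 0 < t := by linarith
  have hle : t ^ (-r) ≤ t⁻¹ := by
    simpa [Real.rpow_neg_one] using Real.rpow_le_rpow_of_exponent_le ht (by linarith : -r ≤ -1)
  have heq : t ^ (-r) * t ^ (r - 1) = t⁻¹ := by
    rw [← Real.rpow_add ht0, show -r + (r - 1) = -1 by ring, Real.rpow_neg_one]
  rw [mul_add, heq, div_eq_mul_inv]
  linarith

section SemigroupEstimates

variable {E : Type*} [NormedAddCommGroup E] [NormedSpace ℝ E] {A : E →L[ℝ] E}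

open NormedSpace (exp)

theorem norm_exp_smul_comp_add_le {P Q : E →L[ℝ] E} {K p γ : ℝ}
    (hK : 0 ≤ K) (hp : 0 ≤ p) (hγ : γ ≤ -1)
    (hP : ∀ τ ≥ (0 : ℝ), ‖exp (τ • A) ∘L P‖ ≤ K * (1 + τ ^ p) * Real.exp (-τ))
    (hQ : ∀ τ ≥ (0 : ℝ), ‖exp (τ • A) ∘L Q‖ ≤ K * Real.exp (γ * τ))
    {τ t : ℝ} (hτ : 0 ≤ τ) (hτt : τ ≤ t) :
    ‖exp (τ • A) ∘L (P + Q)‖ ≤ K * (2 + t ^ p) * Real.exp (-τ) := by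
  have hpow : τ ^ p ≤ t ^ p := Real.rpow_le_rpow hτ hτt hp
  have hexp : Real.exp (γ * τ) ≤ Real.exp (-τ) := Real.exp_le_exp.2 (by nlinarith)
  rw [ContinuousLinearMap.comp_add]
  calc ‖exp (τ • A) ∘L P + exp (τ • A) ∘L Q‖
      ≤ K * (1 + τ ^ p) * Real.exp (-τ) + K * Real.exp (γ * τ) :=
        (norm_add_le _ _).trans (add_le_add (hP τ hτ) (hQ τ hτ))
    _ ≤ K * (1 + t ^ p) * Real.exp (-τ) + K * Real.exp (-τ) := by gcongr
    _ = K * (2 + t ^ p) * Real.exp (-τ) := by ring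

theorem norm_integral_Ioc_exp_smul_le {Q : E →L[ℝ] E} {f : ℝ → E} {a t C : ℝ}
    (hQ : ∀ τ ∈ Icc 0 (t - a), ‖exp (τ • A) ∘L Q‖ ≤ C * Real.exp (-τ))
    (hf : IntegrableOn (fun s => ‖Real.exp s • f s‖) (Ioc a t)) :
    ‖∫ s in Ioc a t, exp ((t - s) • A) (Q (f s))‖
      ≤ C * Real.exp (-t) * ∫ s in Ioc a t, ‖Real.exp s • f s‖ := by
  rw [← integral_const_mul]
  refine norm_integral_le_of_norm_le (hf.const_mul _) ?_
  filter_upwards [ae_restrict_mem measurableSet_Ioc] with s hs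
  calc ‖exp ((t - s) • A) (Q (f s))‖ ≤ C * Real.exp (-(t - s)) * ‖f s‖ :=
        (exp ((t - s) • A) ∘L Q).le_of_opNorm_le
          (hQ _ ⟨by linarith [hs.2], by linarith [hs.1]⟩) _
    _ = C * Real.exp (-t) * ‖Real.exp s • f s‖ := by
        rw [norm_smul, Real.norm_of_nonneg (Real.exp_pos s).le,
          show -(t - s) = -t + s by ring, Real.exp_add]
        ring

theorem norm_exp_smul_integral_Ioi_le {P : E →L[ℝ] E} {f : ℝ → E} {K γ t δ : ℝ}
    (hK : 0 ≤ K) (hγ : -1 < γ) (hP : ∀ τ ≤ (0 : ℝ), ‖exp (τ • A) ∘L P‖ ≤ K * Real.exp (γ * τ))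
    (hf : ∀ s > t, ‖Real.exp s • f s‖ ≤ δ) :
    ‖Real.exp t • ∫ s in Ioi t, exp ((t - s) • A) (P (f s))‖ ≤ K * δ / (1 + γ) := by
  have hb : 0 < 1 + γ := by linarith
  have hpt : ∀ s > t, ‖exp ((t - s) • A) (P (f s))‖
      ≤ K * δ * Real.exp (γ * t) * Real.exp (-(1 + γ) * s) := fun s hs => by
    calc ‖exp ((t - s) • A) (P (f s))‖ ≤ K * Real.exp (γ * (t - s)) * ‖f s‖ :=
          (exp ((t - s) • A) ∘L P).le_of_opNorm_le (hP _ (by linarith)) _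
      _ = K * Real.exp (γ * t) * Real.exp (-(1 + γ) * s) * ‖Real.exp s • f s‖ := by
          rw [norm_smul, Real.norm_of_nonneg (Real.exp_pos s).le,
            show γ * (t - s) = γ * t + -(1 + γ) * s + s by ring, Real.exp_add, Real.exp_add]
          ring
      _ ≤ K * Real.exp (γ * t) * Real.exp (-(1 + γ) * s) * δ := by gcongr; exact hf s hs
      _ = K * δ * Real.exp (γ * t) * Real.exp (-(1 + γ) * s) := by ring
  have hint := norm_integral_le_of_norm_le ((exp_neg_integrableOn_Ioi t hb).const_mul
    (K * δ * Real.exp (γ * t))) ((ae_restrict_mem measurableSet_Ioi).mono hpt)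
  rw [integral_const_mul, integral_exp_mul_Ioi (by linarith) t] at hint
  rw [norm_smul, Real.norm_of_nonneg (Real.exp_pos t).le]
  calc Real.exp t * ‖∫ s in Ioi t, exp ((t - s) • A) (P (f s))‖
      ≤ Real.exp t * (K * δ * Real.exp (γ * t) * (-Real.exp (-(1 + γ) * t) / -(1 + γ))) := by
        gcongr
    _ = K * δ / (1 + γ) * (Real.exp t * Real.exp (γ * t) * Real.exp (-(1 + γ) * t)) := by
        field_simp
    _ = K * δ / (1 + γ) := by rw [← Real.exp_add, ← Real.exp_add]; ring_nf; simp

theorem tendsto_exp_smul_integral_Ioi {P : E →L[ℝ] E} {f : ℝ → E} {K γ : ℝ}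
    (hK : 0 ≤ K) (hγ : -1 < γ)
    (hP : ∀ τ ≤ (0 : ℝ), ‖exp (τ • A) ∘L P‖ ≤ K * Real.exp (γ * τ))
    (hfo : Tendsto (fun s => Real.exp s • f s) atTop (𝓝 0)) :
    Tendsto (fun t => Real.exp t • ∫ s in Ioi t, exp ((t - s) • A) (P (f s))) atTop (𝓝 0) := by
  have hb : 0 < 1 + γ := by linarith
  refine NormedAddGroup.tendsto_nhds_zero.2 fun ε hε => ?_
  set δ := ε * (1 + γ) / (K + 1)
  obtain ⟨T, hT⟩ := eventually_atTop.1
    (NormedAddGroup.tendsto_nhds_zero.1 hfo δ (by positivity))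
  filter_upwards [eventually_ge_atTop T] with t ht
  calc _ ≤ K * δ / (1 + γ) :=
        norm_exp_smul_integral_Ioi_le hK hγ hP fun s hs => (hT s (ht.trans hs.le)).le
    _ = ε * (K / (K + 1)) := by simp only [δ]; field_simp
    _ < ε := mul_lt_of_lt_one_right hε ((div_lt_one (by linarith)).2 (lt_add_one K))

theorem tendsto_exp_mul_rpow_neg_smul_integral_Ioc {Q : E →L[ℝ] E} {f : ℝ → E} {K r a : ℝ}
    (hK : 0 ≤ K) (hr : 1 ≤ r) (ha : 0 ≤ a)
    (hQ : ∀ τ t : ℝ, 0 ≤ τ → τ ≤ t →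
      ‖exp (τ • A) ∘L Q‖ ≤ K * (2 + t ^ (r - 1)) * Real.exp (-τ))
    (hf : ContinuousOn f (Ici a)) (hfo : Tendsto (fun s => Real.exp s • f s) atTop (𝓝 0)) :
    Tendsto (fun t => (Real.exp t * t ^ (-r)) • ∫ s in Ioc a t, exp ((t - s) • A) (Q (f s)))
      atTop (𝓝 0) := by
  set I := fun t => ∫ s in Ioc a t, ‖Real.exp s • f s‖
  have hint : ∀ b, IntegrableOn (fun s => ‖Real.exp s • f s‖) (Ioc a b) := fun b =>
    ((Real.continuous_exp.continuousOn.smul hf).norm.mono Icc_subset_Ici_self).integrableOn_Icc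
      |>.mono_set Ioc_subset_Icc_self
  have hmean : Tendsto (fun t => 3 * K * (I t / t)) atTop (𝓝 0) := by
    simpa using ((integral_Ioc_isLittleO_id_of_tendsto_zero hint
      (by simpa using hfo.norm)).tendsto_div_nhds_zero).const_mul (3 * K)
  refine squeeze_zero_norm' ?_ hmean
  filter_upwards [eventually_ge_atTop (max a 1)] with t ht
  have ht1 : 1 ≤ t := (le_max_right _ _).trans ht
  have hbound := norm_integral_Ioc_exp_smul_le (C := K * (2 + t ^ (r - 1)))
    (fun τ hτ => hQ τ t hτ.1 (by linarith [hτ.2])) (hint t)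
  have hI : 0 ≤ I t := setIntegral_nonneg measurableSet_Ioc fun _ _ => norm_nonneg _
  calc _ = Real.exp t * t ^ (-r) * ‖∫ s in Ioc a t, exp ((t - s) • A) (Q (f s))‖ := by
        rw [norm_smul, Real.norm_of_nonneg (by positivity)]
    _ ≤ Real.exp t * t ^ (-r) * (K * (2 + t ^ (r - 1)) * Real.exp (-t) * I t) := by gcongr
    _ = K * (t ^ (-r) * (2 + t ^ (r - 1))) * I t := by
        rw [Real.exp_neg]; field_simp
    _ ≤ K * (3 / t) * I t := by gcongr; exact rpow_neg_mul_two_add_rpow_sub_one_le hr ht1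
    _ = 3 * K * (I t / t) := by ring

end SemigroupEstimates

theorem green_solution_littleO_general (N : ℕ)
    (𝒜 P₁ P₂ P₃ : EuclideanSpace ℝ (Fin N) →L[ℝ] EuclideanSpace ℝ (Fin N))
    (K r γ₁ γ₂ : ℝ)
    (hK : 0 < K) (hr : 1 ≤ r) (hγ₁ : -1 < γ₁) (hγ₂ : γ₂ < -1)
    (hexp₁ : ∀ τ ≤ (0 : ℝ), ‖NormedSpace.exp (τ • 𝒜) ∘L P₁‖ ≤ K * Real.exp (γ₁ * τ))
    (hexp₂ : ∀ τ ≥ (0 : ℝ),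
      ‖NormedSpace.exp (τ • 𝒜) ∘L P₂‖ ≤ K * (1 + τ ^ (r - 1)) * Real.exp (-τ))
    (hexp₃ : ∀ τ ≥ (0 : ℝ), ‖NormedSpace.exp (τ • 𝒜) ∘L P₃‖ ≤ K * Real.exp (γ₂ * τ))
    (t₀ : ℝ) (ht₀ : 0 < t₀)
    (f : ℝ → EuclideanSpace ℝ (Fin N))
    (hfcont : ContinuousOn f (Set.Ici t₀))
    -- f(t) = o(e^{-t}) as t → ∞
    (hfo : Tendsto (fun t => Real.exp t • f t) atTop (𝓝 0)) :
    -- y(t) = o(t^r e^{-t}) as t → ∞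
    Tendsto (fun t => (Real.exp t * t ^ (-r)) •
      ((∫ s in Set.Ioc t₀ t, NormedSpace.exp ((t - s) • 𝒜) ((P₂ + P₃) (f s)))
        - ∫ s in Set.Ioi t, NormedSpace.exp ((t - s) • 𝒜) (P₁ (f s))))
      atTop (𝓝 0) := by
  have hhead := tendsto_exp_mul_rpow_neg_smul_integral_Ioc hK.le hr ht₀.le
    (fun τ t hτ hτt => norm_exp_smul_comp_add_le hK.le (by linarith) hγ₂.le hexp₂ hexp₃ hτ hτt)
    hfcont hfo
  have htail := (tendsto_rpow_neg_atTop (by linarith : 0 < r)).smul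
    (tendsto_exp_smul_integral_Ioi hK.le hγ₁ hexp₁ hfo)
  rw [smul_zero] at htail
  refine (sub_zero (0 : EuclideanSpace ℝ (Fin N)) ▸ hhead.sub htail).congr fun t => ?_
  rw [smul_sub, smul_smul, mul_comm (t ^ (-r))]

/-- if moreover `f(t) = o(e^{-t})` as `t → ∞`, then the solution
`y(t) = ∫_{t₀}^t e^{𝒜(t-s)}(P₂+P₃) f(s) ds − ∫_t^∞ e^{𝒜(t-s)} P₁ f(s) ds`
satisfies `y(t) = o(t^r e^{-t})` as `t → ∞`. -/
theorem green_solution_littleO (N : ℕ) (hN : 1 ≤ N)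
    (𝒜 P₁ P₂ P₃ : EuclideanSpace ℝ (Fin N) →L[ℝ] EuclideanSpace ℝ (Fin N))
    (K r γ₁ γ₂ : ℝ)
    (hK : 0 < K) (hr : 1 ≤ r) (hγ₁ : -1 < γ₁) (hγ₂ : γ₂ < -1)
    (hP₁ : P₁ ∘L P₁ = P₁) (hP₂ : P₂ ∘L P₂ = P₂) (hP₃ : P₃ ∘L P₃ = P₃)
    (hsum : P₁ + P₂ + P₃ = 1)
    (h12 : P₁ ∘L P₂ = 0) (h21 : P₂ ∘L P₁ = 0) (h13 : P₁ ∘L P₃ = 0)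
    (h31 : P₃ ∘L P₁ = 0) (h23 : P₂ ∘L P₃ = 0) (h32 : P₃ ∘L P₂ = 0)
    (hexp₁ : ∀ τ ≤ (0 : ℝ), ‖NormedSpace.exp (τ • 𝒜) ∘L P₁‖ ≤ K * Real.exp (γ₁ * τ))
    (hexp₂ : ∀ τ ≥ (0 : ℝ),
      ‖NormedSpace.exp (τ • 𝒜) ∘L P₂‖ ≤ K * (1 + τ ^ (r - 1)) * Real.exp (-τ))
    (hexp₃ : ∀ τ ≥ (0 : ℝ), ‖NormedSpace.exp (τ • 𝒜) ∘L P₃‖ ≤ K * Real.exp (γ₂ * τ))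
    (t₀ : ℝ) (ht₀ : 0 < t₀)
    (f : ℝ → EuclideanSpace ℝ (Fin N))
    (hfcont : ContinuousOn f (Set.Ici t₀))
    (M_f : ℝ) (hM_f : 0 < M_f)
    (hfbdd : ∀ t ≥ t₀, ‖f t‖ ≤ M_f * Real.exp (-t))
    -- f(t) = o(e^{-t}) as t → ∞
    (hfo : Tendsto (fun t => Real.exp t • f t) atTop (𝓝 0)) :
    -- y(t) = o(t^r e^{-t}) as t → ∞
    Tendsto (fun t => (Real.exp t * t ^ (-r)) •
      ((∫ s in Set.Ioc t₀ t, NormedSpace.exp ((t - s) • 𝒜) ((P₂ + P₃) (f s)))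
        - ∫ s in Set.Ioi t, NormedSpace.exp ((t - s) • 𝒜) (P₁ (f s))))
      atTop (𝓝 0) :=
  green_solution_littleO_general N 𝒜 P₁ P₂ P₃ K r γ₁ γ₂ hK hr hγ₁ hγ₂ hexp₁ hexp₂ hexp₃ t₀ ht₀ f
    hfcont hfo
end

section
/- Let H : [t₀,∞) → Hom(ℝᴺ) and h : [t₀,∞) → ℝᴺ be continuous with ‖H(t)‖ ≤ M and ‖h(t)‖ ≤ m for all t ≥ t₀, where M > 0, m > 0. Assume t₀ > r and q := 2·C·M·t₀^r·e^{−t₀} < 1. Then the system v′(t) = 𝒜v(t) + e^{−t}(H(t)v(t) + h(t)) has a solution v on [t₀,∞) satisfying ‖v(t)‖ ≤ (2Cm/(1−q))·t^r·e^{−t} for all t ≥ t₀. -/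
open MeasureTheory Set Filter
open scoped Topology BoundedContinuousFunction

/-!
The solution is the fixed point of `u ↦ G[e^{-s} (H u + h)]` in the ball of radius
`K = 2Cm/(1-q)` for the weighted norm `sup_{t ≥ t₀} ‖u t‖ / (t^r e^{-t})`. Since `t^r e^{-t}`
decreases for `t ≥ t₀ > r`, every `u` in that ball is bounded by `K t₀^r e^{-t₀}`, so the forcing
term is `O(e^{-t})`. The estimate on `G`, with `1 + (t - t₀)^r ≤ 2 t^r`, then shows that the map
preserves the ball (because `2C(MK t₀^r e^{-t₀} + m) = K`) and contracts with constant `q`.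
Since `G[f]` solves `y' = 𝒜y + f`, the fixed point solves the perturbed system.
-/

/-- The Green operator
`G[f](t) = ∫_{t₀}^t e^{𝒜(t-s)}(P₂+P₃) f(s) ds − ∫_t^∞ e^{𝒜(t-s)} P₁ f(s) ds`. -/
noncomputable def greenOp {N : ℕ}
    (𝒜 P₁ P₂ P₃ : EuclideanSpace ℝ (Fin N) →L[ℝ] EuclideanSpace ℝ (Fin N))
    (t₀ : ℝ) (f : ℝ → EuclideanSpace ℝ (Fin N)) (t : ℝ) : EuclideanSpace ℝ (Fin N) :=
  (∫ s in Set.Ioc t₀ t, NormedSpace.exp ((t - s) • 𝒜) ((P₂ + P₃) (f s)))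
    - ∫ s in Set.Ioi t, NormedSpace.exp ((t - s) • 𝒜) (P₁ (f s))

section WeightedFixedPoint

variable {E : Type*} [NormedAddCommGroup E] [NormedSpace ℝ E]

def weightedBall (a : ℝ) (w : ℝ → ℝ) (K : ℝ) : Set (ℝ → E) :=
  {u | ContinuousOn u (Ici a) ∧ ∀ t ≥ a, ‖u t‖ ≤ K * w t}

variable {a K q : ℝ} {w : ℝ → ℝ}

noncomputable def weightedExtend (a : ℝ) (w : ℝ → ℝ) (g : Ici a →ᵇ E) : ℝ → E :=
  fun t => w t • g (projIci a t)

theorem weightedExtend_mem_weightedBall (hw : ContinuousOn w (Ici a)) (hw0 : ∀ t ≥ a, 0 < w t)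
    {g : Ici a →ᵇ E} (hg : ‖g‖ ≤ K) : weightedExtend a w g ∈ weightedBall a w K := by
  refine ⟨hw.smul (g.continuous.comp ?_).continuousOn, fun t ht => ?_⟩
  · exact (continuous_const.max continuous_id).subtype_mk _
  · rw [weightedExtend, norm_smul, Real.norm_of_nonneg (hw0 t ht).le, mul_comm]
    exact mul_le_mul_of_nonneg_right ((g.norm_coe_le_norm _).trans hg) (hw0 t ht).le

theorem norm_weightedExtend_sub_le (hw0 : ∀ t ≥ a, 0 < w t) (g g' : Ici a →ᵇ E) {t : ℝ}
    (ht : a ≤ t) :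
    ‖weightedExtend a w g t - weightedExtend a w g' t‖ ≤ dist g g' * w t := by
  rw [weightedExtend, weightedExtend, ← smul_sub, norm_smul, Real.norm_of_nonneg (hw0 t ht).le,
    mul_comm, ← dist_eq_norm]
  exact mul_le_mul_of_nonneg_right (g.dist_coe_le_dist _) (hw0 t ht).le

theorem norm_inv_smul_le_of_mem_weightedBall (hw0 : ∀ t ≥ a, 0 < w t) {u : ℝ → E}
    (hu : u ∈ weightedBall a w K) {t : ℝ} (ht : a ≤ t) : ‖(w t)⁻¹ • u t‖ ≤ K := by
  rw [norm_smul, norm_inv, Real.norm_of_nonneg (hw0 t ht).le, inv_mul_le_iff₀ (hw0 t ht), mul_comm]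
  exact hu.2 t ht

noncomputable def weightedRestrict (hw : ContinuousOn w (Ici a)) (hw0 : ∀ t ≥ a, 0 < w t)
    {u : ℝ → E} (hu : u ∈ weightedBall a w K) : Ici a →ᵇ E :=
  .ofNormedAddCommGroup (fun t => (w t)⁻¹ • u t)
    (((hw.inv₀ fun t ht => (hw0 t ht).ne').smul hu.1).domRestrict) K
    fun t => norm_inv_smul_le_of_mem_weightedBall hw0 hu t.2

theorem weightedRestrict_apply (hw : ContinuousOn w (Ici a)) (hw0 : ∀ t ≥ a, 0 < w t)
    {u : ℝ → E} (hu : u ∈ weightedBall a w K) (t : Ici a) :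
    weightedRestrict hw hw0 hu t = (w t)⁻¹ • u t := rfl

/-- Banach's fixed point theorem for the weighted sup norm `sup_{t ≥ a} ‖u t‖ / w t`, applied in
the closed ball of radius `K` of `Ici a →ᵇ E` through `u = w • g`. -/
theorem exists_fixedPoint_of_weighted_contraction [CompleteSpace E]
    (hw : ContinuousOn w (Ici a)) (hw0 : ∀ t ≥ a, 0 < w t) (hK : 0 ≤ K) (hq0 : 0 ≤ q)
    (hq1 : q < 1) {T : (ℝ → E) → ℝ → E}
    (hT : MapsTo T (weightedBall a w K) (weightedBall a w K))
    (hTcontr : ∀ u ∈ weightedBall a w K, ∀ u' ∈ weightedBall a w K, ∀ c ≥ 0,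
      (∀ t ≥ a, ‖u t - u' t‖ ≤ c * w t) → ∀ t ≥ a, ‖T u t - T u' t‖ ≤ q * c * w t) :
    ∃ u ∈ weightedBall a w K, ∀ t ≥ a, T u t = u t := by
  let X := Metric.closedBall (0 : Ici a →ᵇ E) K
  have : CompleteSpace X := Metric.isClosed_closedBall.completeSpace_coe
  have : Nonempty X := ⟨⟨0, Metric.mem_closedBall_self hK⟩⟩
  have hext (g : X) := weightedExtend_mem_weightedBall hw hw0 (mem_closedBall_zero_iff.1 g.2)
  let S : X → X := fun g => ⟨weightedRestrict hw hw0 (hT (hext g)),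
    mem_closedBall_zero_iff.2 <| (BoundedContinuousFunction.norm_le hK).2 fun t =>
      norm_inv_smul_le_of_mem_weightedBall hw0 (hT (hext g)) t.2⟩
  have hS : ContractingWith (⟨q, hq0⟩ : NNReal) S := by
    refine ⟨hq1, LipschitzWith.of_dist_le_mul fun g g' => ?_⟩
    refine (BoundedContinuousFunction.dist_le (by positivity)).2 fun t => ?_
    have hwt := hw0 t t.2
    have key := hTcontr _ (hext g) _ (hext g') _ dist_nonneg
      (fun s hs => norm_weightedExtend_sub_le hw0 g.1 g'.1 hs) t t.2
    rw [dist_eq_norm, weightedRestrict_apply, weightedRestrict_apply, ← smul_sub, norm_smul,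
      norm_inv, Real.norm_of_nonneg hwt.le, inv_mul_le_iff₀ hwt, mul_comm]
    exact key
  set g := ContractingWith.fixedPoint S hS
  refine ⟨weightedExtend a w g.1, hext g, fun t ht => ?_⟩
  have hfix := congrArg (fun g : X => g.1 ⟨t, ht⟩) (ContractingWith.fixedPoint_isFixedPt hS)
  simp only [S, weightedRestrict_apply] at hfix
  rw [inv_smul_eq_iff₀ (hw0 t ht).ne'] at hfix
  rw [hfix, weightedExtend, projIci_of_mem ht]

end WeightedFixedPoint

theorem rpow_mul_exp_neg_le_of_le {r a t : ℝ} (hr : 0 ≤ r) (hra : r ≤ a) (ha : 0 < a)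
    (hat : a ≤ t) : t ^ r * Real.exp (-t) ≤ a ^ r * Real.exp (-a) := by
  have ht : 0 < t := ha.trans_le hat
  rw [Real.rpow_def_of_pos ht, Real.rpow_def_of_pos ha, ← Real.exp_add, ← Real.exp_add,
    Real.exp_le_exp]
  have key : r * (Real.log t - Real.log a) ≤ t - a :=
    calc r * (Real.log t - Real.log a) = r * Real.log (t / a) := by
          rw [Real.log_div ht.ne' ha.ne']
      _ ≤ r * (t / a - 1) := by gcongr; exact Real.log_le_sub_one_of_pos (by positivity)
      _ ≤ a * (t / a - 1) := by gcongr; rwa [sub_nonneg, one_le_div ha]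
      _ = t - a := by field_simp
  linarith

theorem one_add_sub_rpow_le_two_mul_rpow {r a t : ℝ} (hr : 0 ≤ r) (ha : 0 ≤ a) (ht : 1 ≤ t)
    (hat : a ≤ t) : 1 + (t - a) ^ r ≤ 2 * t ^ r := by
  have h1 : 1 ≤ t ^ r := Real.one_le_rpow ht hr
  have h2 : (t - a) ^ r ≤ t ^ r := Real.rpow_le_rpow (by linarith) (by linarith) hr
  linarith

theorem integrableOn_Ioc_exp_smul_apply {E : Type*} [NormedAddCommGroup E] [NormedSpace ℝ E]
    [CompleteSpace E] (𝒜 P : E →L[ℝ] E) {f : ℝ → E} {t₀ : ℝ} (hf : ContinuousOn f (Ici t₀))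
    (t : ℝ) : IntegrableOn (fun s => NormedSpace.exp ((t - s) • 𝒜) (P (f s))) (Ioc t₀ t) := by
  refine (ContinuousOn.integrableOn_Icc ?_).mono_set Ioc_subset_Icc_self
  have hexp : Continuous (NormedSpace.exp : (E →L[ℝ] E) → E →L[ℝ] E) :=
    continuous_iff_continuousAt.2 fun B => (NormedSpace.exp_analytic (𝕂 := ℝ) B).continuousAt
  replace hexp : Continuous fun s : ℝ => NormedSpace.exp ((t - s) • 𝒜) := by fun_prop
  exact hexp.continuousOn.clm_apply (P.continuous.comp_continuousOn (hf.mono Icc_subset_Ici_self))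

section Perturbation

variable {E : Type*} [NormedAddCommGroup E] [NormedSpace ℝ E]
  {H : ℝ → E →L[ℝ] E} {h : ℝ → E} {t₀ M m : ℝ}

noncomputable def perturbation (H : ℝ → E →L[ℝ] E) (h : ℝ → E) (u : ℝ → E) (s : ℝ) : E :=
  Real.exp (-s) • (H s (u s) + h s)

theorem continuousOn_perturbation (hH : ContinuousOn H (Ici t₀)) (hh : ContinuousOn h (Ici t₀))
    {u : ℝ → E} (hu : ContinuousOn u (Ici t₀)) : ContinuousOn (perturbation H h u) (Ici t₀) :=
  (Real.continuous_exp.comp continuous_neg).continuousOn.smul ((hH.clm_apply hu).add hh)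

theorem norm_perturbation_le (hHbdd : ∀ t ≥ t₀, ‖H t‖ ≤ M) (hhbdd : ∀ t ≥ t₀, ‖h t‖ ≤ m)
    (hM : 0 ≤ M) {u : ℝ → E} {B : ℝ} (hu : ∀ t ≥ t₀, ‖u t‖ ≤ B) (t : ℝ) (ht : t₀ ≤ t) :
    ‖perturbation H h u t‖ ≤ (M * B + m) * Real.exp (-t) := by
  rw [perturbation, norm_smul, Real.norm_of_nonneg (Real.exp_pos _).le, mul_comm]
  gcongr
  calc ‖H t (u t) + h t‖ ≤ ‖H t‖ * ‖u t‖ + ‖h t‖ := norm_add_le_of_le ((H t).le_opNorm _) le_rfl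
    _ ≤ M * B + m := add_le_add (mul_le_mul (hHbdd t ht) (hu t ht) (norm_nonneg _) hM) (hhbdd t ht)

theorem norm_perturbation_sub_le (hHbdd : ∀ t ≥ t₀, ‖H t‖ ≤ M) (hM : 0 ≤ M) {u u' : ℝ → E}
    {B : ℝ} (huu' : ∀ t ≥ t₀, ‖u t - u' t‖ ≤ B) (t : ℝ) (ht : t₀ ≤ t) :
    ‖perturbation H h u t - perturbation H h u' t‖ ≤ M * B * Real.exp (-t) := by
  rw [perturbation, perturbation, ← smul_sub, add_sub_add_right_eq_sub, ← map_sub, norm_smul,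
    Real.norm_of_nonneg (Real.exp_pos _).le, mul_comm]
  gcongr
  exact ((H t).le_opNorm _).trans (mul_le_mul (hHbdd t ht) (huu' t ht) (norm_nonneg _) hM)

end Perturbation

section Green

variable {N : ℕ} {𝒜 P₁ P₂ P₃ : EuclideanSpace ℝ (Fin N) →L[ℝ] EuclideanSpace ℝ (Fin N)}
  {t₀ r C : ℝ}

theorem greenOp_sub {f g : ℝ → EuclideanSpace ℝ (Fin N)} (hf : ContinuousOn f (Ici t₀))
    (hg : ContinuousOn g (Ici t₀)) {t : ℝ}
    (hfi : IntegrableOn (fun s => NormedSpace.exp ((t - s) • 𝒜) (P₁ (f s))) (Ioi t))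
    (hgi : IntegrableOn (fun s => NormedSpace.exp ((t - s) • 𝒜) (P₁ (g s))) (Ioi t)) :
    greenOp 𝒜 P₁ P₂ P₃ t₀ (f - g) t = greenOp 𝒜 P₁ P₂ P₃ t₀ f t - greenOp 𝒜 P₁ P₂ P₃ t₀ g t := by
  simp only [greenOp, Pi.sub_apply, map_sub]
  rw [integral_sub (integrableOn_Ioc_exp_smul_apply 𝒜 _ hf t)
      (integrableOn_Ioc_exp_smul_apply 𝒜 _ hg t), integral_sub hfi hgi]
  abel

def GreenOpEstimate (𝒜 P₁ P₂ P₃ : EuclideanSpace ℝ (Fin N) →L[ℝ] EuclideanSpace ℝ (Fin N))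
    (t₀ r C : ℝ) : Prop :=
  ∀ M_f > (0 : ℝ), ∀ f : ℝ → EuclideanSpace ℝ (Fin N), ContinuousOn f (Ici t₀) →
    (∀ t ≥ t₀, ‖f t‖ ≤ M_f * Real.exp (-t)) →
    (∀ t ≥ t₀, IntegrableOn (fun s => NormedSpace.exp ((t - s) • 𝒜) (P₁ (f s))) (Ioi t)) ∧
    (∀ t ∈ Ici t₀, HasDerivWithinAt (greenOp 𝒜 P₁ P₂ P₃ t₀ f)
      (𝒜 (greenOp 𝒜 P₁ P₂ P₃ t₀ f t) + f t) (Ici t₀) t) ∧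
    (∀ t ≥ t₀, ‖greenOp 𝒜 P₁ P₂ P₃ t₀ f t‖ ≤ C * M_f * Real.exp (-t) * (1 + (t - t₀) ^ r))

namespace GreenOpEstimate

variable (hG : GreenOpEstimate 𝒜 P₁ P₂ P₃ t₀ r C) {f g : ℝ → EuclideanSpace ℝ (Fin N)}
include hG

/-- The estimate extends to `M_f = 0` by letting `M_f ↓ 0`. -/
theorem norm_le_of_nonneg {M_f : ℝ} (hM_f : 0 ≤ M_f) (hf : ContinuousOn f (Ici t₀))
    (hfb : ∀ t ≥ t₀, ‖f t‖ ≤ M_f * Real.exp (-t)) {t : ℝ} (ht : t₀ ≤ t) :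
    ‖greenOp 𝒜 P₁ P₂ P₃ t₀ f t‖ ≤ C * M_f * Real.exp (-t) * (1 + (t - t₀) ^ r) := by
  have hlim : Tendsto (fun M : ℝ => C * M * Real.exp (-t) * (1 + (t - t₀) ^ r)) (𝓝[>] M_f)
      (𝓝 (C * M_f * Real.exp (-t) * (1 + (t - t₀) ^ r))) :=
    (Continuous.tendsto (by fun_prop) _).mono_left nhdsWithin_le_nhds
  refine ge_of_tendsto hlim (eventually_nhdsWithin_of_forall fun M hM => ?_)
  refine (hG M (hM_f.trans_lt hM) f hf fun s hs => (hfb s hs).trans ?_).2.2 t ht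
  gcongr
  exact le_of_lt hM

theorem norm_le_weight (hC : 0 ≤ C) (hr : 0 ≤ r) (ht₀ : 1 ≤ t₀) {M_f : ℝ} (hM_f : 0 ≤ M_f)
    (hf : ContinuousOn f (Ici t₀)) (hfb : ∀ t ≥ t₀, ‖f t‖ ≤ M_f * Real.exp (-t)) {t : ℝ}
    (ht : t₀ ≤ t) : ‖greenOp 𝒜 P₁ P₂ P₃ t₀ f t‖ ≤ 2 * C * M_f * (t ^ r * Real.exp (-t)) :=
  calc ‖greenOp 𝒜 P₁ P₂ P₃ t₀ f t‖ ≤ C * M_f * Real.exp (-t) * (1 + (t - t₀) ^ r) :=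
        hG.norm_le_of_nonneg hM_f hf hfb ht
    _ ≤ C * M_f * Real.exp (-t) * (2 * t ^ r) := by
        gcongr
        exact one_add_sub_rpow_le_two_mul_rpow hr (by linarith) (ht₀.trans ht) ht
    _ = 2 * C * M_f * (t ^ r * Real.exp (-t)) := by ring

theorem norm_sub_le_weight (hC : 0 ≤ C) (hr : 0 ≤ r) (ht₀ : 1 ≤ t₀) {M_f D : ℝ} (hM_f : 0 < M_f)
    (hD : 0 ≤ D) (hf : ContinuousOn f (Ici t₀)) (hg : ContinuousOn g (Ici t₀))
    (hfb : ∀ t ≥ t₀, ‖f t‖ ≤ M_f * Real.exp (-t)) (hgb : ∀ t ≥ t₀, ‖g t‖ ≤ M_f * Real.exp (-t))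
    (hfg : ∀ t ≥ t₀, ‖f t - g t‖ ≤ D * Real.exp (-t)) {t : ℝ} (ht : t₀ ≤ t) :
    ‖greenOp 𝒜 P₁ P₂ P₃ t₀ f t - greenOp 𝒜 P₁ P₂ P₃ t₀ g t‖
      ≤ 2 * C * D * (t ^ r * Real.exp (-t)) := by
  rw [← greenOp_sub hf hg ((hG M_f hM_f f hf hfb).1 t ht) ((hG M_f hM_f g hg hgb).1 t ht)]
  exact hG.norm_le_weight hC hr ht₀ hD (hf.sub hg) hfg ht

end GreenOpEstimate

end Green

theorem norm_le_of_le_rpow_mul_exp_neg {E : Type*} [NormedAddCommGroup E] {x : ℝ → E}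
    {r t₀ c : ℝ} (hr : 0 ≤ r) (hrt₀ : r ≤ t₀) (ht₀ : 0 < t₀) (hc : 0 ≤ c)
    (hx : ∀ t ≥ t₀, ‖x t‖ ≤ c * (t ^ r * Real.exp (-t))) (t : ℝ) (ht : t₀ ≤ t) :
    ‖x t‖ ≤ c * (t₀ ^ r * Real.exp (-t₀)) :=
  (hx t ht).trans (mul_le_mul_of_nonneg_left (rpow_mul_exp_neg_le_of_le hr hrt₀ ht₀ ht) hc)

section PerturbedGreenOp

variable {N : ℕ} {𝒜 P₁ P₂ P₃ : EuclideanSpace ℝ (Fin N) →L[ℝ] EuclideanSpace ℝ (Fin N)}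
  {t₀ r C M m K : ℝ} {H : ℝ → EuclideanSpace ℝ (Fin N) →L[ℝ] EuclideanSpace ℝ (Fin N)}
  {h u : ℝ → EuclideanSpace ℝ (Fin N)}

theorem norm_perturbation_le_of_mem_weightedBall (hr : 0 ≤ r) (hrt₀ : r ≤ t₀) (ht₀ : 0 < t₀)
    (hHbdd : ∀ t ≥ t₀, ‖H t‖ ≤ M) (hhbdd : ∀ t ≥ t₀, ‖h t‖ ≤ m) (hM : 0 ≤ M) (hK : 0 ≤ K)
    (hu : u ∈ weightedBall t₀ (fun t => t ^ r * Real.exp (-t)) K) :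
    ∀ t ≥ t₀, ‖perturbation H h u t‖ ≤ (M * (K * (t₀ ^ r * Real.exp (-t₀))) + m) * Real.exp (-t) :=
  norm_perturbation_le hHbdd hhbdd hM (norm_le_of_le_rpow_mul_exp_neg hr hrt₀ ht₀ hK hu.2)

theorem hasDerivWithinAt_greenOp_perturbation (hG : GreenOpEstimate 𝒜 P₁ P₂ P₃ t₀ r C)
    (hr : 0 ≤ r) (hrt₀ : r ≤ t₀) (ht₀ : 0 < t₀)
    (hHcont : ContinuousOn H (Ici t₀)) (hhcont : ContinuousOn h (Ici t₀))
    (hHbdd : ∀ t ≥ t₀, ‖H t‖ ≤ M) (hhbdd : ∀ t ≥ t₀, ‖h t‖ ≤ m) (hM : 0 ≤ M) (hm : 0 < m)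
    (hK : 0 ≤ K) (hu : u ∈ weightedBall t₀ (fun t => t ^ r * Real.exp (-t)) K) {t : ℝ}
    (ht : t ∈ Ici t₀) :
    HasDerivWithinAt (greenOp 𝒜 P₁ P₂ P₃ t₀ (perturbation H h u))
      (𝒜 (greenOp 𝒜 P₁ P₂ P₃ t₀ (perturbation H h u) t) + perturbation H h u t) (Ici t₀) t :=
  (hG _ (by positivity) _ (continuousOn_perturbation hHcont hhcont hu.1)
    (norm_perturbation_le_of_mem_weightedBall hr hrt₀ ht₀ hHbdd hhbdd hM hK hu)).2.1 t ht

theorem mapsTo_greenOp_perturbation (hG : GreenOpEstimate 𝒜 P₁ P₂ P₃ t₀ r C) (hC : 0 ≤ C)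
    (hr : 0 ≤ r) (hrt₀ : r ≤ t₀) (ht₀ : 1 ≤ t₀)
    (hHcont : ContinuousOn H (Ici t₀)) (hhcont : ContinuousOn h (Ici t₀))
    (hHbdd : ∀ t ≥ t₀, ‖H t‖ ≤ M) (hhbdd : ∀ t ≥ t₀, ‖h t‖ ≤ m) (hM : 0 ≤ M) (hm : 0 < m)
    (hK : 0 ≤ K) (hKfix : 2 * C * (M * (K * (t₀ ^ r * Real.exp (-t₀))) + m) = K) :
    MapsTo (fun u => greenOp 𝒜 P₁ P₂ P₃ t₀ (perturbation H h u))
      (weightedBall t₀ (fun t => t ^ r * Real.exp (-t)) K)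
      (weightedBall t₀ (fun t => t ^ r * Real.exp (-t)) K) := by
  intro u hu
  have ht₀' : 0 < t₀ := by linarith
  refine ⟨fun t ht => (hasDerivWithinAt_greenOp_perturbation hG hr hrt₀ ht₀' hHcont hhcont hHbdd
    hhbdd hM hm hK hu ht).continuousWithinAt, fun t ht => ?_⟩
  have hGb := hG.norm_le_weight hC hr ht₀ (by positivity)
    (continuousOn_perturbation hHcont hhcont hu.1)
    (norm_perturbation_le_of_mem_weightedBall hr hrt₀ ht₀' hHbdd hhbdd hM hK hu) ht
  rwa [hKfix] at hGb

theorem norm_greenOp_perturbation_sub_le (hG : GreenOpEstimate 𝒜 P₁ P₂ P₃ t₀ r C) (hC : 0 ≤ C)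
    (hr : 0 ≤ r) (hrt₀ : r ≤ t₀) (ht₀ : 1 ≤ t₀)
    (hHcont : ContinuousOn H (Ici t₀)) (hhcont : ContinuousOn h (Ici t₀))
    (hHbdd : ∀ t ≥ t₀, ‖H t‖ ≤ M) (hhbdd : ∀ t ≥ t₀, ‖h t‖ ≤ m) (hM : 0 ≤ M) (hm : 0 < m)
    (hK : 0 ≤ K) {u' : ℝ → EuclideanSpace ℝ (Fin N)}
    (hu : u ∈ weightedBall t₀ (fun t => t ^ r * Real.exp (-t)) K)
    (hu' : u' ∈ weightedBall t₀ (fun t => t ^ r * Real.exp (-t)) K) {c : ℝ} (hc : 0 ≤ c)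
    (huu' : ∀ t ≥ t₀, ‖u t - u' t‖ ≤ c * (t ^ r * Real.exp (-t))) {t : ℝ} (ht : t₀ ≤ t) :
    ‖greenOp 𝒜 P₁ P₂ P₃ t₀ (perturbation H h u) t
        - greenOp 𝒜 P₁ P₂ P₃ t₀ (perturbation H h u') t‖
      ≤ 2 * C * M * t₀ ^ r * Real.exp (-t₀) * c * (t ^ r * Real.exp (-t)) := by
  have ht₀' : 0 < t₀ := by linarith
  have hdiff := norm_perturbation_sub_le (h := h) hHbdd hM
    (norm_le_of_le_rpow_mul_exp_neg hr hrt₀ ht₀' hc huu')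
  refine (hG.norm_sub_le_weight hC hr ht₀ (by positivity) (by positivity)
    (continuousOn_perturbation hHcont hhcont hu.1) (continuousOn_perturbation hHcont hhcont hu'.1)
    (norm_perturbation_le_of_mem_weightedBall hr hrt₀ ht₀' hHbdd hhbdd hM hK hu)
    (norm_perturbation_le_of_mem_weightedBall hr hrt₀ ht₀' hHbdd hhbdd hM hK hu') hdiff
    ht).trans_eq ?_
  ring

end PerturbedGreenOp

theorem perturbed_system_solution_general (N : ℕ)
    (𝒜 P₁ P₂ P₃ : EuclideanSpace ℝ (Fin N) →L[ℝ] EuclideanSpace ℝ (Fin N))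
    (r t₀ : ℝ) (hr : 1 ≤ r)
    (C : ℝ) (hC : 0 < C)
    -- the property of C from the preceding lemma (Statement 1):
    (hGreen : ∀ M_f > (0 : ℝ), ∀ f : ℝ → EuclideanSpace ℝ (Fin N),
      ContinuousOn f (Set.Ici t₀) →
      (∀ t ≥ t₀, ‖f t‖ ≤ M_f * Real.exp (-t)) →
      (∀ t ≥ t₀, IntegrableOn
          (fun s => NormedSpace.exp ((t - s) • 𝒜) (P₁ (f s))) (Set.Ioi t)) ∧
      (∀ t ∈ Set.Ici t₀,
        HasDerivWithinAt (greenOp 𝒜 P₁ P₂ P₃ t₀ f)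
          (𝒜 (greenOp 𝒜 P₁ P₂ P₃ t₀ f t) + f t) (Set.Ici t₀) t) ∧
      (∀ t ≥ t₀, ‖greenOp 𝒜 P₁ P₂ P₃ t₀ f t‖
          ≤ C * M_f * Real.exp (-t) * (1 + (t - t₀) ^ r)))
    (H : ℝ → EuclideanSpace ℝ (Fin N) →L[ℝ] EuclideanSpace ℝ (Fin N))
    (h : ℝ → EuclideanSpace ℝ (Fin N))
    (M m : ℝ) (hM : 0 < M) (hm : 0 < m)
    (hHcont : ContinuousOn H (Set.Ici t₀)) (hhcont : ContinuousOn h (Set.Ici t₀))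
    (hHbdd : ∀ t ≥ t₀, ‖H t‖ ≤ M) (hhbdd : ∀ t ≥ t₀, ‖h t‖ ≤ m)
    (ht₀r : r < t₀)
    (hq : 2 * C * M * t₀ ^ r * Real.exp (-t₀) < 1) :
    ∃ v : ℝ → EuclideanSpace ℝ (Fin N),
      (∀ t ∈ Set.Ici t₀,
        HasDerivWithinAt v
          (𝒜 (v t) + Real.exp (-t) • (H t (v t) + h t)) (Set.Ici t₀) t) ∧
      (∀ t ≥ t₀, ‖v t‖ ≤
        2 * C * m / (1 - 2 * C * M * t₀ ^ r * Real.exp (-t₀)) * t ^ r * Real.exp (-t)) := by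
  have hr₀ : 0 ≤ r := by linarith
  have ht₀ : 1 ≤ t₀ := by linarith
  set K := 2 * C * m / (1 - 2 * C * M * t₀ ^ r * Real.exp (-t₀))
  have hK : 0 ≤ K := div_nonneg (by positivity) (by linarith)
  have hKfix : 2 * C * (M * (K * (t₀ ^ r * Real.exp (-t₀))) + m) = K := by
    have hK1q : K * (1 - 2 * C * M * t₀ ^ r * Real.exp (-t₀)) = 2 * C * m :=
      div_mul_cancel₀ _ (by linarith)
    linear_combination -hK1q
  obtain ⟨v, hv, hfix⟩ := exists_fixedPoint_of_weighted_contraction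
    ((Real.continuous_rpow_const hr₀).mul (by fun_prop)).continuousOn
    (fun t ht => mul_pos (Real.rpow_pos_of_pos (by linarith) r) (Real.exp_pos _)) hK
    (by positivity) hq
    (mapsTo_greenOp_perturbation hGreen hC.le hr₀ ht₀r.le ht₀ hHcont hhcont hHbdd hhbdd hM.le hm
      hK hKfix)
    (fun u hu u' hu' c hc huu' t ht => norm_greenOp_perturbation_sub_le hGreen hC.le hr₀ ht₀r.le
      ht₀ hHcont hhcont hHbdd hhbdd hM.le hm hK hu hu' hc huu' ht)
  refine ⟨v, fun t ht => ?_, fun t ht => (hv.2 t ht).trans_eq (mul_assoc _ _ _).symm⟩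
  have hderiv := hasDerivWithinAt_greenOp_perturbation hGreen hr₀ ht₀r.le (by linarith) hHcont
    hhcont hHbdd hhbdd hM.le hm hK hv ht
  rw [hfix t ht] at hderiv
  exact hderiv.congr (fun s hs => (hfix s hs).symm) (hfix t ht).symm

/-- existence of a solution `v` of `v' = 𝒜 v + e^{-t}(H(t) v + h(t))`
with `‖v(t)‖ ≤ (2Cm/(1-q)) t^r e^{-t}` on `[t₀, ∞)`, where `q = 2 C M t₀^r e^{-t₀} < 1`. -/
theorem perturbed_system_solution (N : ℕ) (hN : 1 ≤ N)
    (𝒜 P₁ P₂ P₃ : EuclideanSpace ℝ (Fin N) →L[ℝ] EuclideanSpace ℝ (Fin N))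
    (r t₀ : ℝ) (hr : 1 ≤ r) (ht₀ : 0 < t₀)
    (hP₁ : P₁ ∘L P₁ = P₁) (hP₂ : P₂ ∘L P₂ = P₂) (hP₃ : P₃ ∘L P₃ = P₃)
    (hsum : P₁ + P₂ + P₃ = 1)
    (h12 : P₁ ∘L P₂ = 0) (h21 : P₂ ∘L P₁ = 0) (h13 : P₁ ∘L P₃ = 0)
    (h31 : P₃ ∘L P₁ = 0) (h23 : P₂ ∘L P₃ = 0) (h32 : P₃ ∘L P₂ = 0)
    (C : ℝ) (hC : 0 < C)
    -- the property of C from the preceding lemma (Statement 1):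
    (hGreen : ∀ M_f > (0 : ℝ), ∀ f : ℝ → EuclideanSpace ℝ (Fin N),
      ContinuousOn f (Set.Ici t₀) →
      (∀ t ≥ t₀, ‖f t‖ ≤ M_f * Real.exp (-t)) →
      (∀ t ≥ t₀, IntegrableOn
          (fun s => NormedSpace.exp ((t - s) • 𝒜) (P₁ (f s))) (Set.Ioi t)) ∧
      (∀ t ∈ Set.Ici t₀,
        HasDerivWithinAt (greenOp 𝒜 P₁ P₂ P₃ t₀ f)
          (𝒜 (greenOp 𝒜 P₁ P₂ P₃ t₀ f t) + f t) (Set.Ici t₀) t) ∧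
      (∀ t ≥ t₀, ‖greenOp 𝒜 P₁ P₂ P₃ t₀ f t‖
          ≤ C * M_f * Real.exp (-t) * (1 + (t - t₀) ^ r)))
    (H : ℝ → EuclideanSpace ℝ (Fin N) →L[ℝ] EuclideanSpace ℝ (Fin N))
    (h : ℝ → EuclideanSpace ℝ (Fin N))
    (M m : ℝ) (hM : 0 < M) (hm : 0 < m)
    (hHcont : ContinuousOn H (Set.Ici t₀)) (hhcont : ContinuousOn h (Set.Ici t₀))
    (hHbdd : ∀ t ≥ t₀, ‖H t‖ ≤ M) (hhbdd : ∀ t ≥ t₀, ‖h t‖ ≤ m)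
    (ht₀r : r < t₀)
    (hq : 2 * C * M * t₀ ^ r * Real.exp (-t₀) < 1) :
    ∃ v : ℝ → EuclideanSpace ℝ (Fin N),
      (∀ t ∈ Set.Ici t₀,
        HasDerivWithinAt v
          (𝒜 (v t) + Real.exp (-t) • (H t (v t) + h t)) (Set.Ici t₀) t) ∧
      (∀ t ≥ t₀, ‖v t‖ ≤
        2 * C * m / (1 - 2 * C * M * t₀ ^ r * Real.exp (-t₀)) * t ^ r * Real.exp (-t)) :=
  perturbed_system_solution_general N 𝒜 P₁ P₂ P₃ r t₀ hr C hC hGreen H h M m hM hm hHcont hhcont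
    hHbdd hhbdd ht₀r hq
end

section
/- Let y : [0,∞) → ℝⁿ be continuously differentiable on [0,∞) and satisfy y′(x) = (A/x + B(x))y(x) + g(x) for all x > 0. Then A·y(0) = 0 and (E − A)·y′(0) = B(0)y(0) + g(0); consequently, if no root of the characteristic polynomial of A has real part 1, then y(x) = y(0) + (E−A)⁻¹(B(0)y(0)+g(0))·x + o(x) as x → 0⁺. -/
/-!
For `x > 0` the equation says `A (y x) = x • (y' x - B x (y x) - g x)`, and the right-hand side
tends to `0` as `x → 0⁺` because `y'`, `B`, `y`, `g` are continuous at `0`; hence `A (y 0) = 0`.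
Dividing the same identity by `x` turns its left-hand side into `A` applied to the difference
quotient of `y` at `0`, so in the limit `A (y' 0) = y' 0 - B 0 (y 0) - g 0`. If `1` is not an
eigenvalue of `A`, then `1 - A` is invertible, `y' 0 = (1 - A)⁻¹ (B 0 (y 0) + g 0)`, and the
expansion is the definition of the derivative of `y` at `0`.
-/

open Set Filter
open scoped Topology

section SingularODE

variable {E : Type*} [NormedAddCommGroup E] [NormedSpace ℝ E] {A : E →L[ℝ] E} {y h : ℝ → E}
  {L : E}

theorem map_eq_zero_of_eventually_map_eq_smul (hy : ContinuousWithinAt y (Ioi 0) 0)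
    (hh : Tendsto h (𝓝[>] 0) (𝓝 L)) (hAy : ∀ᶠ x in 𝓝[>] 0, A (y x) = x • h x) :
    A (y 0) = 0 := by
  have hsmul : Tendsto (fun x : ℝ => x • h x) (𝓝[>] 0) (𝓝 ((0 : ℝ) • L)) :=
    (tendsto_id.mono_left nhdsWithin_le_nhds).smul hh
  rw [zero_smul] at hsmul
  exact tendsto_nhds_unique ((A.continuous.tendsto _).comp hy) (hsmul.congr' (hAy.mono
    fun _ hx => hx.symm))

theorem map_eq_of_hasDerivWithinAt_of_eventually_map_eq_smul {v : E}
    (hy : HasDerivWithinAt y v (Ioi 0) 0) (hh : Tendsto h (𝓝[>] 0) (𝓝 L))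
    (hAy : ∀ᶠ x in 𝓝[>] 0, A (y x) = x • h x) : A v = L := by
  have hA0 := map_eq_zero_of_eventually_map_eq_smul hy.continuousWithinAt hh hAy
  have hslope : Tendsto (slope y 0) (𝓝[>] 0) (𝓝 v) := by
    simpa using hasDerivWithinAt_iff_tendsto_slope.mp hy
  refine tendsto_nhds_unique ((A.continuous.tendsto _).comp hslope) (hh.congr' ?_)
  filter_upwards [self_mem_nhdsWithin, hAy] with x hx hAyx
  simp only [Function.comp_apply, slope_def_module, sub_zero, map_smul, map_sub, hA0, hAyx,
    smul_smul, inv_mul_cancel₀ (mem_Ioi.mp hx).ne', one_smul]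

end SingularODE

theorem ContinuousLinearMap.isUnit_one_sub_of_not_isRoot_charpoly {𝕜 E : Type*}
    [NontriviallyNormedField 𝕜] [CompleteSpace 𝕜] [NormedAddCommGroup E] [NormedSpace 𝕜 E]
    [FiniteDimensional 𝕜 E] {A : E →L[𝕜] E} (hA : ¬ (A : E →ₗ[𝕜] E).charpoly.IsRoot 1) :
    IsUnit (1 - A) := by
  have : CompleteSpace E := FiniteDimensional.complete 𝕜 E
  have h1 : (1 : 𝕜) ∉ spectrum 𝕜 A := by
    rwa [ContinuousLinearMap.spectrum_eq, Module.End.mem_spectrum_iff_isRoot_charpoly]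
  simpa using spectrum.notMem_iff.mp h1

theorem C1_solution_initial_structure_general (n : ℕ)
    (A : EuclideanSpace ℝ (Fin n) →L[ℝ] EuclideanSpace ℝ (Fin n))
    (B : ℝ → EuclideanSpace ℝ (Fin n) →L[ℝ] EuclideanSpace ℝ (Fin n))
    (g : ℝ → EuclideanSpace ℝ (Fin n))
    (hBcont : ContinuousOn B (Set.Ici 0))
    (hgcont : ContinuousOn g (Set.Ici 0))
    (y y' : ℝ → EuclideanSpace ℝ (Fin n))
    -- y is continuously differentiable on [0,∞) with derivative y'
    (hyd : ∀ x ∈ Set.Ici (0 : ℝ), HasDerivWithinAt y (y' x) (Set.Ici 0) x)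
    (hy'c : ContinuousOn y' (Set.Ici 0))
    -- y solves the singular system for x > 0
    (hODE : ∀ x > (0 : ℝ), y' x = x⁻¹ • A (y x) + B x (y x) + g x) :
    A (y 0) = 0 ∧
    (1 - A) (y' 0) = B 0 (y 0) + g 0 ∧
    ((∀ z : ℂ,
        (Polynomial.map (algebraMap ℝ ℂ)
          (A : EuclideanSpace ℝ (Fin n) →ₗ[ℝ] EuclideanSpace ℝ (Fin n)).charpoly).IsRoot z →
        z.re ≠ 1) →
      (fun x => y x - y 0 - x • Ring.inverse (1 - A) (B 0 (y 0) + g 0))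
        =o[𝓝[>] (0 : ℝ)] fun x => x) := by
  have hIoi : 𝓝[>] (0 : ℝ) ≤ 𝓝[Ici 0] 0 := nhdsWithin_mono _ Ioi_subset_Ici_self
  have hyd0 := hyd 0 self_mem_Ici
  have hycont : ContinuousOn y (Ici 0) := fun x hx => (hyd x hx).continuousWithinAt
  have hh : Tendsto (fun x => y' x - (B x (y x) + g x)) (𝓝[>] 0)
      (𝓝 (y' 0 - (B 0 (y 0) + g 0))) :=
    ((hy'c.sub ((hBcont.clm_apply hycont).add hgcont)) 0 self_mem_Ici).mono_left hIoi
  have hAy : ∀ᶠ x in 𝓝[>] 0, A (y x) = x • (y' x - (B x (y x) + g x)) := by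
    filter_upwards [self_mem_nhdsWithin] with x hx
    rw [hODE x hx, add_assoc, add_sub_cancel_right, smul_inv_smul₀ (ne_of_gt hx)]
  have hA0 := map_eq_zero_of_eventually_map_eq_smul (hycont 0 self_mem_Ici |>.mono
    Ioi_subset_Ici_self) hh hAy
  have hAy' := map_eq_of_hasDerivWithinAt_of_eventually_map_eq_smul
    (hyd0.mono Ioi_subset_Ici_self) hh hAy
  have h2 : (1 - A) (y' 0) = B 0 (y 0) + g 0 := by
    rw [sub_apply, one_apply_eq_self, hAy', sub_sub_cancel]
  refine ⟨hA0, h2, fun hroot => ?_⟩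
  have hu : IsUnit (1 - A) := ContinuousLinearMap.isUnit_one_sub_of_not_isRoot_charpoly
    fun h1 => hroot 1 (by simpa using h1.map (f := algebraMap ℝ ℂ)) Complex.one_re
  have hval : Ring.inverse (1 - A) (B 0 (y 0) + g 0) = y' 0 := by
    rw [← h2, ← mul_apply_eq_comp, Ring.inverse_mul_cancel _ hu, one_apply_eq_self]
  simpa [hval] using (hasDerivWithinAt_iff_isLittleO.mp hyd0).mono hIoi

/-- every `C¹([0,∞))`-solution of `y' = (A/x + B(x)) y + g(x)` satisfies
`A y(0) = 0` and `(E - A) y'(0) = B(0) y(0) + g(0)`; if moreover no complex root of the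
characteristic polynomial of `A` has real part `1`, then
`y(x) = y(0) + (E-A)⁻¹(B(0)y(0)+g(0)) x + o(x)` as `x → 0⁺`. -/
theorem C1_solution_initial_structure (n : ℕ)
    (A : EuclideanSpace ℝ (Fin n) →L[ℝ] EuclideanSpace ℝ (Fin n))
    (B : ℝ → EuclideanSpace ℝ (Fin n) →L[ℝ] EuclideanSpace ℝ (Fin n))
    (g : ℝ → EuclideanSpace ℝ (Fin n))
    (hBcont : ContinuousOn B (Set.Ici 0)) (hBbdd : ∃ M, ∀ x ≥ (0 : ℝ), ‖B x‖ ≤ M)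
    (hgcont : ContinuousOn g (Set.Ici 0)) (hgbdd : ∃ M, ∀ x ≥ (0 : ℝ), ‖g x‖ ≤ M)
    (y y' : ℝ → EuclideanSpace ℝ (Fin n))
    -- y is continuously differentiable on [0,∞) with derivative y'
    (hyd : ∀ x ∈ Set.Ici (0 : ℝ), HasDerivWithinAt y (y' x) (Set.Ici 0) x)
    (hy'c : ContinuousOn y' (Set.Ici 0))
    -- y solves the singular system for x > 0
    (hODE : ∀ x > (0 : ℝ), y' x = x⁻¹ • A (y x) + B x (y x) + g x) :
    A (y 0) = 0 ∧
    (1 - A) (y' 0) = B 0 (y 0) + g 0 ∧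
    ((∀ z : ℂ,
        (Polynomial.map (algebraMap ℝ ℂ)
          (A : EuclideanSpace ℝ (Fin n) →ₗ[ℝ] EuclideanSpace ℝ (Fin n)).charpoly).IsRoot z →
        z.re ≠ 1) →
      (fun x => y x - y 0 - x • Ring.inverse (1 - A) (B 0 (y 0) + g 0))
        =o[𝓝[>] (0 : ℝ)] fun x => x) :=
  C1_solution_initial_structure_general n A B g hBcont hgcont y y' hyd hy'c hODE
end

section
/- Let g : (0,x₀] → ℝⁿ be continuous with m := sup ‖g‖ < ∞. Then: (i) for every x ∈ (0,x₀] the integrals below converge absolutely and ‖∫₀ˣ Y(x;x₀)Q₋Y(s;x₀)⁻¹ g(s) ds‖ ≤ m·C₀·x/α and ‖∫ₓ^{x₀} Y(x;x₀)Q₊Y(s;x₀)⁻¹ g(s) ds‖ ≤ m·C₀·x/α; (ii) for every v ∈ ℝⁿ the function ȳ_v(x) := Y(x;x₀)v + ∫₀ˣ Y(x;x₀)Q₋Y(s;x₀)⁻¹ g(s) ds + ∫_{x₀}^{x} Y(x;x₀)Q₊Y(s;x₀)⁻¹ g(s) ds solves y′ = (A/x + B(x))y + g(x) on (0,x₀];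 (iii) if Q₊v = v, then ȳ_v(x) → 0 as x → 0⁺. -/
open MeasureTheory Set Filter
open scoped Topology

/-!
The dichotomy estimates bound the two kernels by `C₀ (x/s)^(1-α)` for `s ≤ x` and by
`C₀ (x/s)^(1+α)` for `s ≥ x`; these powers integrate to `x/α` over `(0, x]` and over `(x, ∞)`
respectively, which gives (i). Since `Q₊ + Q₋ = E`, on `(0, x₀]` the function `ȳ_v` equals
`Y(x) (v + c + ∫_{x₀}^x Y(s)⁻¹ g(s) ds)` for a constant `c`, i.e. it is given by the
variation-of-constants formula, which gives (ii). For (iii), `Y(x) v = Y(x) Q₊ Y(x₀)⁻¹ v` is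
`O(x^{1+α})` and both integrals are `O(x)`.
-/

section RpowMajorant

variable {γ x : ℝ}

theorem div_rpow_eq_rpow_mul_rpow_neg {s : ℝ} (hx : 0 ≤ x) (hs : 0 ≤ s) :
    (x / s) ^ γ = x ^ γ * s ^ (-γ) := by
  rw [Real.div_rpow hx hs, div_eq_mul_inv, Real.rpow_neg hs]

theorem integrableOn_Ioc_zero_div_rpow (hγ : γ < 1) (hx : 0 < x) :
    IntegrableOn (fun s => (x / s) ^ γ) (Ioc 0 x) := by
  have h := (intervalIntegral.intervalIntegrable_rpow' (a := 0) (b := x)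
    (show -1 < -γ by linarith)).const_mul (x ^ γ)
  rw [intervalIntegrable_iff_integrableOn_Ioc_of_le hx.le] at h
  exact h.congr_fun (fun s hs => (div_rpow_eq_rpow_mul_rpow_neg hx.le hs.1.le).symm)
    measurableSet_Ioc

theorem integral_Ioc_zero_div_rpow (hγ : γ < 1) (hx : 0 < x) :
    ∫ s in Ioc 0 x, (x / s) ^ γ = x / (1 - γ) := by
  rw [setIntegral_congr_fun measurableSet_Ioc
      (fun s hs => div_rpow_eq_rpow_mul_rpow_neg hx.le hs.1.le), integral_const_mul,
    ← intervalIntegral.integral_of_le hx.le, integral_rpow (Or.inl (by linarith)),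
    Real.zero_rpow (by linarith), sub_zero, neg_add_eq_sub, mul_div_assoc',
    ← Real.rpow_add hx, add_sub_cancel, Real.rpow_one]

theorem integrableOn_Ioi_div_rpow (hγ : 1 < γ) (hx : 0 < x) :
    IntegrableOn (fun s => (x / s) ^ γ) (Ioi x) :=
  IntegrableOn.congr_fun ((integrableOn_Ioi_rpow_of_lt (by linarith) hx).const_mul (x ^ γ))
    (fun s hs => (div_rpow_eq_rpow_mul_rpow_neg hx.le (hx.trans hs).le).symm) measurableSet_Ioi

theorem integral_Ioi_div_rpow (hγ : 1 < γ) (hx : 0 < x) :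
    ∫ s in Ioi x, (x / s) ^ γ = x / (γ - 1) := by
  rw [setIntegral_congr_fun measurableSet_Ioi
      (fun s hs => div_rpow_eq_rpow_mul_rpow_neg hx.le (hx.trans hs).le), integral_const_mul,
    integral_Ioi_rpow_of_lt (by linarith) hx, mul_div_assoc', mul_neg, ← Real.rpow_add hx,
    add_neg_cancel_left, Real.rpow_one, neg_div, ← div_neg, neg_add_eq_sub, neg_sub]

end RpowMajorant

section KernelIntegrals

variable {E F : Type*} [NormedAddCommGroup E] [NormedSpace ℝ E] [NormedAddCommGroup F]
  [NormedSpace ℝ F] {K : ℝ → E →L[ℝ] F} {g : ℝ → E} {C m : ℝ}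

theorem integrableOn_and_norm_setIntegral_clm_apply_le {S : Set ℝ} {φ : ℝ → ℝ}
    (hφ : IntegrableOn φ S) (hS : MeasurableSet S)
    (hKg : AEStronglyMeasurable (fun s => K s (g s)) (volume.restrict S))
    (hK : ∀ s ∈ S, ‖K s‖ ≤ C * φ s) (hg : ∀ s ∈ S, ‖g s‖ ≤ m) :
    IntegrableOn (fun s => K s (g s)) S ∧ ‖∫ s in S, K s (g s)‖ ≤ m * C * ∫ s in S, φ s := by
  have hbound : ∀ᵐ s ∂volume.restrict S, ‖K s (g s)‖ ≤ m * C * φ s :=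
    (ae_restrict_iff' hS).2 <| .of_forall fun s hs =>
      (ContinuousLinearMap.le_of_opNorm_le_of_le _ (hK s hs) (hg s hs)).trans_eq (by ring)
  refine ⟨Integrable.mono' (hφ.const_mul (m * C)) hKg hbound, ?_⟩
  rw [← integral_const_mul]
  exact norm_integral_le_of_norm_le (hφ.const_mul (m * C)) hbound

variable {γ x : ℝ}

theorem integrableOn_and_norm_integral_Ioc_zero_clm_apply_le (hγ : γ < 1) (hx : 0 < x)
    (hKg : AEStronglyMeasurable (fun s => K s (g s)) (volume.restrict (Ioc 0 x)))
    (hK : ∀ s ∈ Ioc 0 x, ‖K s‖ ≤ C * (x / s) ^ γ) (hg : ∀ s ∈ Ioc 0 x, ‖g s‖ ≤ m) :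
    IntegrableOn (fun s => K s (g s)) (Ioc 0 x) ∧
      ‖∫ s in Ioc 0 x, K s (g s)‖ ≤ m * C * x / (1 - γ) := by
  have h := integrableOn_and_norm_setIntegral_clm_apply_le
    (integrableOn_Ioc_zero_div_rpow hγ hx) measurableSet_Ioc hKg hK hg
  rwa [integral_Ioc_zero_div_rpow hγ hx, ← mul_div_assoc] at h

theorem integrableOn_and_norm_integral_Ioc_clm_apply_le {b : ℝ} (hγ : 1 < γ) (hx : 0 < x)
    (hC : 0 ≤ C) (hm : 0 ≤ m)
    (hKg : AEStronglyMeasurable (fun s => K s (g s)) (volume.restrict (Ioc x b)))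
    (hK : ∀ s ∈ Ioc x b, ‖K s‖ ≤ C * (x / s) ^ γ) (hg : ∀ s ∈ Ioc x b, ‖g s‖ ≤ m) :
    IntegrableOn (fun s => K s (g s)) (Ioc x b) ∧
      ‖∫ s in Ioc x b, K s (g s)‖ ≤ m * C * x / (γ - 1) := by
  have hφ := integrableOn_Ioi_div_rpow hγ hx
  obtain ⟨hint, hnorm⟩ := integrableOn_and_norm_setIntegral_clm_apply_le
    (hφ.mono_set Ioc_subset_Ioi_self) measurableSet_Ioc hKg hK hg
  refine ⟨hint, hnorm.trans ?_⟩
  rw [mul_div_assoc, ← integral_Ioi_div_rpow hγ hx]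
  gcongr
  · exact (ae_restrict_iff' measurableSet_Ioi).2 <| .of_forall fun s hs =>
      Real.rpow_nonneg (div_nonneg hx.le (hx.trans hs).le) γ
  · exact Ioc_subset_Ioi_self

end KernelIntegrals

theorem ContinuousOn.integral_hasDerivWithinAt_Ioc {E : Type*} [NormedAddCommGroup E]
    [NormedSpace ℝ E] [CompleteSpace E] {f : ℝ → E} {a b c x : ℝ}
    (hf : ContinuousOn f (Ioc a b)) (hc : c ∈ Ioc a b) (hx : x ∈ Ioc a b) :
    HasDerivWithinAt (fun u => ∫ t in c..u, f t) (f x) (Ioc a b) x := by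
  -- Mathlib's FTC covers `Icc` (via `FTCFilter`) but not `Ioc`, so shrink to some `[a', b] ∋ c, x`.
  obtain ⟨a', ha', ha'cx⟩ := exists_between (lt_min hc.1 hx.1)
  have ha'x : a' < x := ha'cx.trans_le (min_le_right c x)
  have hx' : x ∈ Icc a' b := ⟨ha'x.le, hx.2⟩
  have hc' : c ∈ Icc a' b := ⟨(ha'cx.trans_le (min_le_left c x)).le, hc.2⟩
  have hf' : ContinuousOn f (Icc a' b) :=
    hf.mono fun t ht => ⟨ha'.trans_le ht.1, ht.2⟩
  have : Fact (x ∈ Icc a' b) := ⟨hx'⟩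
  have hderiv := intervalIntegral.integral_hasDerivWithinAt_right (s := Icc a' b)
    (t := Icc a' b) ((hf'.mono (uIcc_subset_Icc hc' hx')).intervalIntegrable)
    (hf'.stronglyMeasurableAtFilter_nhdsWithin measurableSet_Icc x) (hf' x hx')
  exact hderiv.mono_of_mem_nhdsWithin <| mem_of_superset
    (inter_mem_nhdsWithin _ (Ioi_mem_nhds ha'x)) fun t ht => ⟨ht.2.le, ht.1.2⟩

theorem ContinuousOn.ringInverse {R X : Type*} [NormedRing R] [HasSummableGeomSeries R]
    [TopologicalSpace X] {f : X → R} {S : Set X} (hf : ContinuousOn f S)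
    (hu : ∀ x ∈ S, IsUnit (f x)) : ContinuousOn (fun x => Ring.inverse (f x)) S := fun x hx => by
  have h := NormedRing.inverse_continuousAt (hu x hx).unit
  rw [IsUnit.unit_spec] at h
  exact h.comp_continuousWithinAt (hf x hx)

section ParticularSolution

variable {E : Type*} [NormedAddCommGroup E] [NormedSpace ℝ E] [CompleteSpace E]

theorem integral_Ioc_zero_add_intervalIntegral_eq {F : Type*} [NormedAddCommGroup F]
    [NormedSpace ℝ F] [CompleteSpace F] (T : E →L[ℝ] F) {P Q : E →L[ℝ] E} (hPQ : P + Q = 1)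
    {q : ℝ → E} {a u : ℝ} (hu : u ∈ Ioc 0 a) (hq : ContinuousOn q (Ioc 0 a))
    (hQq : IntegrableOn (fun s => Q (q s)) (Ioc 0 a)) :
    (∫ s in Ioc 0 u, T (Q (q s))) + ∫ s in a..u, T (P (q s)) =
      T ((∫ s in Ioc 0 a, Q (q s)) + ∫ s in a..u, q s) := by
  have hqau : ContinuousOn q (uIcc a u) := hq.mono <| by
    rw [uIcc_of_ge hu.2]; exact fun t ht => ⟨hu.1.trans_le ht.1, ht.2⟩
  have hPq : IntervalIntegrable (fun s => P (q s)) volume a u :=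
    (P.continuous.comp_continuousOn hqau).intervalIntegrable
  have hQq' : IntervalIntegrable (fun s => Q (q s)) volume a u :=
    (Q.continuous.comp_continuousOn hqau).intervalIntegrable
  have hsplit : ∫ s in Ioc 0 u, Q (q s) = (∫ s in Ioc 0 a, Q (q s)) + ∫ s in a..u, Q (q s) := by
    rw [← intervalIntegral.integral_of_le hu.1.le,
      ← intervalIntegral.integral_of_le (hu.1.le.trans hu.2),
      intervalIntegral.integral_add_adjacent_intervals _ hQq']
    exact (intervalIntegrable_iff_integrableOn_Ioc_of_le (hu.1.le.trans hu.2)).2 hQq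
  rw [T.integral_comp_comm (hQq.mono_set (Ioc_subset_Ioc_right hu.2)),
    T.intervalIntegral_comp_comm hPq, ← map_add, hsplit, add_assoc,
    ← intervalIntegral.integral_add hQq' hPq]
  simp_rw [← add_apply, add_comm Q P, hPQ, one_apply_eq_self]

theorem hasDerivWithinAt_variation_of_constants {Y L : ℝ → E →L[ℝ] E} {P Q : E →L[ℝ] E}
    {g : ℝ → E} {a x : ℝ} (v : E) (hY : ∀ x ∈ Ioc 0 a, HasDerivAt Y (L x ∘L Y x) x)
    (hYu : ∀ x ∈ Ioc 0 a, IsUnit (Y x)) (hPQ : P + Q = 1)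
    (hq : ContinuousOn (fun s => Ring.inverse (Y s) (g s)) (Ioc 0 a))
    (hQq : IntegrableOn (fun s => Q (Ring.inverse (Y s) (g s))) (Ioc 0 a)) (hx : x ∈ Ioc 0 a) :
    HasDerivWithinAt
      (fun u => Y u v + (∫ s in Ioc 0 u, (Y u ∘L Q ∘L Ring.inverse (Y s)) (g s))
        + ∫ s in a..u, (Y u ∘L P ∘L Ring.inverse (Y s)) (g s))
      (L x (Y x v + (∫ s in Ioc 0 x, (Y x ∘L Q ∘L Ring.inverse (Y s)) (g s))
        + ∫ s in a..x, (Y x ∘L P ∘L Ring.inverse (Y s)) (g s)) + g x)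
      (Ioc 0 a) x := by
  have hform : ∀ u ∈ Ioc 0 a,
      Y u v + (∫ s in Ioc 0 u, (Y u ∘L Q ∘L Ring.inverse (Y s)) (g s))
        + ∫ s in a..u, (Y u ∘L P ∘L Ring.inverse (Y s)) (g s) =
      Y u (v + ((∫ s in Ioc 0 a, Q (Ring.inverse (Y s) (g s)))
        + ∫ s in a..u, Ring.inverse (Y s) (g s))) := fun u hu => by
    rw [map_add, add_assoc, ← integral_Ioc_zero_add_intervalIntegral_eq (Y u) hPQ hu hq hQq]
    rfl
  have hYx : Y x (Ring.inverse (Y x) (g x)) = g x := by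
    rw [← mul_apply_eq_comp, Ring.mul_inverse_cancel _ (hYu x hx), one_apply_eq_self]
  have hderiv := (hY x hx).hasDerivWithinAt.clm_apply
    (((hq.integral_hasDerivWithinAt_Ioc ⟨hx.1.trans_le hx.2, le_rfl⟩ hx).const_add
      (∫ s in Ioc 0 a, Q (Ring.inverse (Y s) (g s)))).const_add v)
  rw [hYx, ContinuousLinearMap.comp_apply, ← hform x hx] at hderiv
  exact hderiv.congr hform (hform x hx)

end ParticularSolution

theorem tendsto_nhdsGT_zero_of_norm_le {E : Type*} [NormedAddCommGroup E] {f : ℝ → E}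
    {a β c d : ℝ} (ha : 0 < a) (hβ : 0 < β) (hf : ∀ u ∈ Ioc 0 a, ‖f u‖ ≤ c * (u / a) ^ β + d * u) :
    Tendsto f (𝓝[>] 0) (𝓝 0) := by
  have hrpow := Real.continuous_rpow_const hβ.le
  have hbound : Continuous fun u => c * (u / a) ^ β + d * u := by fun_prop
  refine squeeze_zero_norm' ?_ (by
    simpa [Real.zero_rpow hβ.ne'] using (hbound.tendsto 0).mono_left nhdsWithin_le_nhds)
  filter_upwards [Ioc_mem_nhdsGT ha] using hf

theorem solutions_near_singular_point_general (n : ℕ)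
    (A : EuclideanSpace ℝ (Fin n) →L[ℝ] EuclideanSpace ℝ (Fin n))
    (B : ℝ → EuclideanSpace ℝ (Fin n) →L[ℝ] EuclideanSpace ℝ (Fin n))
    (x₀ : ℝ) (hx₀ : 0 < x₀)
    -- the evolution operator Y(·;x₀)
    (Y : ℝ → EuclideanSpace ℝ (Fin n) →L[ℝ] EuclideanSpace ℝ (Fin n))
    (hYd : ∀ x > (0 : ℝ), HasDerivAt Y ((x⁻¹ • A + B x) ∘L Y x) x)
    (hYx₀ : Y x₀ = 1) (hYu : ∀ x > (0 : ℝ), IsUnit (Y x))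
    -- the projectors Q₊, Q₋
    (Qp Qm : EuclideanSpace ℝ (Fin n) →L[ℝ] EuclideanSpace ℝ (Fin n))
    (hQsum : Qp + Qm = 1)
    -- the dichotomy-type estimates near the singular point
    (C₀ α : ℝ) (hC₀ : 0 < C₀) (hα : 0 < α)
    (hestp : ∀ x s : ℝ, 0 < x → x ≤ s → s ≤ x₀ →
      ‖Y x ∘L Qp ∘L Ring.inverse (Y s)‖ ≤ C₀ * (x / s) ^ (1 + α))
    (hestm : ∀ x s : ℝ, 0 < s → s ≤ x → x ≤ x₀ →
      ‖Y x ∘L Qm ∘L Ring.inverse (Y s)‖ ≤ C₀ * (x / s) ^ (1 - α))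
    -- the inhomogeneity g
    (g : ℝ → EuclideanSpace ℝ (Fin n)) (m : ℝ)
    (hgcont : ContinuousOn g (Set.Ioc 0 x₀))
    (hgbdd : ∀ x ∈ Set.Ioc (0 : ℝ) x₀, ‖g x‖ ≤ m) :
    -- (i) convergence and bounds of the two integrals
    (∀ x ∈ Set.Ioc (0 : ℝ) x₀,
      IntegrableOn (fun s => (Y x ∘L Qm ∘L Ring.inverse (Y s)) (g s)) (Set.Ioc 0 x) ∧
      ‖∫ s in Set.Ioc (0 : ℝ) x, (Y x ∘L Qm ∘L Ring.inverse (Y s)) (g s)‖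
        ≤ m * C₀ * x / α ∧
      IntegrableOn (fun s => (Y x ∘L Qp ∘L Ring.inverse (Y s)) (g s)) (Set.Ioc x x₀) ∧
      ‖∫ s in Set.Ioc x x₀, (Y x ∘L Qp ∘L Ring.inverse (Y s)) (g s)‖
        ≤ m * C₀ * x / α) ∧
    -- (ii) ȳ_v solves the non-homogeneous system on (0, x₀]
    (∀ v : EuclideanSpace ℝ (Fin n), ∀ x ∈ Set.Ioc (0 : ℝ) x₀,
      HasDerivWithinAt
        (fun u => Y u v + (∫ s in Set.Ioc (0 : ℝ) u, (Y u ∘L Qm ∘L Ring.inverse (Y s)) (g s))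
          + ∫ s in x₀..u, (Y u ∘L Qp ∘L Ring.inverse (Y s)) (g s))
        (x⁻¹ • A (Y x v + (∫ s in Set.Ioc (0 : ℝ) x, (Y x ∘L Qm ∘L Ring.inverse (Y s)) (g s))
            + ∫ s in x₀..x, (Y x ∘L Qp ∘L Ring.inverse (Y s)) (g s))
          + B x (Y x v + (∫ s in Set.Ioc (0 : ℝ) x, (Y x ∘L Qm ∘L Ring.inverse (Y s)) (g s))
            + ∫ s in x₀..x, (Y x ∘L Qp ∘L Ring.inverse (Y s)) (g s))
          + g x)
        (Set.Ioc 0 x₀) x) ∧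
    -- (iii) if Q₊ v = v then ȳ_v(x) → 0 as x → 0⁺
    (∀ v : EuclideanSpace ℝ (Fin n), Qp v = v →
      Tendsto
        (fun u => Y u v + (∫ s in Set.Ioc (0 : ℝ) u, (Y u ∘L Qm ∘L Ring.inverse (Y s)) (g s))
          + ∫ s in x₀..u, (Y u ∘L Qp ∘L Ring.inverse (Y s)) (g s))
        (𝓝[>] 0) (𝓝 0)) := by
  have hm : 0 ≤ m := (norm_nonneg _).trans (hgbdd x₀ ⟨hx₀, le_rfl⟩)
  have hq : ContinuousOn (fun s => Ring.inverse (Y s) (g s)) (Ioc 0 x₀) :=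
    ((ContinuousOn.ringInverse (fun s hs => (hYd s hs).continuousAt.continuousWithinAt)
      hYu).mono Ioc_subset_Ioi_self).clm_apply hgcont
  have hmeas (T : EuclideanSpace ℝ (Fin n) →L[ℝ] EuclideanSpace ℝ (Fin n)) :
      AEStronglyMeasurable (fun s => T (Ring.inverse (Y s) (g s))) (volume.restrict (Ioc 0 x₀)) :=
    (T.continuous.comp_continuousOn hq).aestronglyMeasurable measurableSet_Ioc
  have hminus (x : ℝ) (hx : x ∈ Ioc 0 x₀) := by
    have h := integrableOn_and_norm_integral_Ioc_zero_clm_apply_le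
      (K := fun s => Y x ∘L Qm ∘L Ring.inverse (Y s)) (g := g) (γ := 1 - α) (by linarith) hx.1
      ((hmeas (Y x ∘L Qm)).mono_set (Ioc_subset_Ioc_right hx.2))
      (fun s hs => hestm x s hs.1 hs.2 hx.2) (fun s hs => hgbdd s ⟨hs.1, hs.2.trans hx.2⟩)
    rwa [sub_sub_cancel] at h
  have hplus (x : ℝ) (hx : x ∈ Ioc 0 x₀) := by
    have h := integrableOn_and_norm_integral_Ioc_clm_apply_le
      (K := fun s => Y x ∘L Qp ∘L Ring.inverse (Y s)) (g := g) (γ := 1 + α) (by linarith) hx.1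
      hC₀.le hm ((hmeas (Y x ∘L Qp)).mono_set (Ioc_subset_Ioc_left hx.1.le))
      (fun s hs => hestp x s hx.1 hs.1.le hs.2)
      (fun s hs => hgbdd s ⟨hx.1.trans hs.1, hs.2⟩)
    rwa [add_sub_cancel_left] at h
  refine ⟨fun x hx => ⟨(hminus x hx).1, (hminus x hx).2, (hplus x hx).1, (hplus x hx).2⟩,
    fun v x hx => ?_, fun v hv => ?_⟩
  · have hQq := (hminus x₀ ⟨hx₀, le_rfl⟩).1
    simp only [hYx₀] at hQq
    simpa only [add_apply, smul_apply] using
      hasDerivWithinAt_variation_of_constants v (fun x hx => hYd x hx.1)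
        (fun x hx => hYu x hx.1) hQsum hq hQq hx
  · refine tendsto_nhdsGT_zero_of_norm_le hx₀ (β := 1 + α) (c := C₀ * ‖v‖)
      (d := 2 * (m * C₀ / α)) (by linarith) fun u hu => ?_
    have hYv : ‖Y u v‖ ≤ C₀ * (u / x₀) ^ (1 + α) * ‖v‖ := by
      have hYv : Y u v = (Y u ∘L Qp ∘L Ring.inverse (Y x₀)) v := by simp [hYx₀, hv]
      rw [hYv]
      exact ContinuousLinearMap.le_of_opNorm_le _ (hestp u x₀ hu.1 hu.2 le_rfl) v
    have hI : ‖∫ s in x₀..u, (Y u ∘L Qp ∘L Ring.inverse (Y s)) (g s)‖ ≤ m * C₀ * u / α := by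
      rw [intervalIntegral.norm_integral_eq_norm_integral_uIoc, uIoc_of_ge hu.2]
      exact (hplus u hu).2
    calc _ ≤ _ := norm_add₃_le
      _ ≤ C₀ * (u / x₀) ^ (1 + α) * ‖v‖ + m * C₀ * u / α + m * C₀ * u / α :=
        add_le_add_three hYv (hminus u hu).2 hI
      _ = C₀ * ‖v‖ * (u / x₀) ^ (1 + α) + 2 * (m * C₀ / α) * u := by ring

/-- on `(0, x₀]`, the family
`ȳ_v(x) = Y(x;x₀) v + ∫₀ˣ Y(x;x₀) Q₋ Y(s;x₀)⁻¹ g(s) ds + ∫_{x₀}^x Y(x;x₀) Q₊ Y(s;x₀)⁻¹ g(s) ds`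
is well defined, its integrals obey the bound `m C₀ x / α`, it solves
`y' = (A/x + B(x)) y + g(x)`, and tends to `0` as `x → 0⁺` whenever `Q₊ v = v`. -/
theorem solutions_near_singular_point (n : ℕ)
    (A : EuclideanSpace ℝ (Fin n) →L[ℝ] EuclideanSpace ℝ (Fin n))
    (B : ℝ → EuclideanSpace ℝ (Fin n) →L[ℝ] EuclideanSpace ℝ (Fin n))
    (hBcont : ContinuousOn B (Set.Ioi 0)) (hBbdd : ∃ M, ∀ x > (0 : ℝ), ‖B x‖ ≤ M)
    (x₀ : ℝ) (hx₀ : 0 < x₀)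
    -- the evolution operator Y(·;x₀)
    (Y : ℝ → EuclideanSpace ℝ (Fin n) →L[ℝ] EuclideanSpace ℝ (Fin n))
    (hYd : ∀ x > (0 : ℝ), HasDerivAt Y ((x⁻¹ • A + B x) ∘L Y x) x)
    (hYx₀ : Y x₀ = 1) (hYu : ∀ x > (0 : ℝ), IsUnit (Y x))
    -- the projectors Q₊, Q₋
    (Qp Qm : EuclideanSpace ℝ (Fin n) →L[ℝ] EuclideanSpace ℝ (Fin n))
    (hQp : Qp ∘L Qp = Qp) (hQm : Qm ∘L Qm = Qm) (hQsum : Qp + Qm = 1)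
    (hQpm : Qp ∘L Qm = 0) (hQmp : Qm ∘L Qp = 0)
    -- the dichotomy-type estimates near the singular point
    (C₀ α : ℝ) (hC₀ : 0 < C₀) (hα : 0 < α)
    (hestp : ∀ x s : ℝ, 0 < x → x ≤ s → s ≤ x₀ →
      ‖Y x ∘L Qp ∘L Ring.inverse (Y s)‖ ≤ C₀ * (x / s) ^ (1 + α))
    (hestm : ∀ x s : ℝ, 0 < s → s ≤ x → x ≤ x₀ →
      ‖Y x ∘L Qm ∘L Ring.inverse (Y s)‖ ≤ C₀ * (x / s) ^ (1 - α))
    -- the inhomogeneity g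
    (g : ℝ → EuclideanSpace ℝ (Fin n)) (m : ℝ)
    (hgcont : ContinuousOn g (Set.Ioc 0 x₀))
    (hgbdd : ∀ x ∈ Set.Ioc (0 : ℝ) x₀, ‖g x‖ ≤ m) :
    -- (i) convergence and bounds of the two integrals
    (∀ x ∈ Set.Ioc (0 : ℝ) x₀,
      IntegrableOn (fun s => (Y x ∘L Qm ∘L Ring.inverse (Y s)) (g s)) (Set.Ioc 0 x) ∧
      ‖∫ s in Set.Ioc (0 : ℝ) x, (Y x ∘L Qm ∘L Ring.inverse (Y s)) (g s)‖
        ≤ m * C₀ * x / α ∧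
      IntegrableOn (fun s => (Y x ∘L Qp ∘L Ring.inverse (Y s)) (g s)) (Set.Ioc x x₀) ∧
      ‖∫ s in Set.Ioc x x₀, (Y x ∘L Qp ∘L Ring.inverse (Y s)) (g s)‖
        ≤ m * C₀ * x / α) ∧
    -- (ii) ȳ_v solves the non-homogeneous system on (0, x₀]
    (∀ v : EuclideanSpace ℝ (Fin n), ∀ x ∈ Set.Ioc (0 : ℝ) x₀,
      HasDerivWithinAt
        (fun u => Y u v + (∫ s in Set.Ioc (0 : ℝ) u, (Y u ∘L Qm ∘L Ring.inverse (Y s)) (g s))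
          + ∫ s in x₀..u, (Y u ∘L Qp ∘L Ring.inverse (Y s)) (g s))
        (x⁻¹ • A (Y x v + (∫ s in Set.Ioc (0 : ℝ) x, (Y x ∘L Qm ∘L Ring.inverse (Y s)) (g s))
            + ∫ s in x₀..x, (Y x ∘L Qp ∘L Ring.inverse (Y s)) (g s))
          + B x (Y x v + (∫ s in Set.Ioc (0 : ℝ) x, (Y x ∘L Qm ∘L Ring.inverse (Y s)) (g s))
            + ∫ s in x₀..x, (Y x ∘L Qp ∘L Ring.inverse (Y s)) (g s))
          + g x)
        (Set.Ioc 0 x₀) x) ∧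
    -- (iii) if Q₊ v = v then ȳ_v(x) → 0 as x → 0⁺
    (∀ v : EuclideanSpace ℝ (Fin n), Qp v = v →
      Tendsto
        (fun u => Y u v + (∫ s in Set.Ioc (0 : ℝ) u, (Y u ∘L Qm ∘L Ring.inverse (Y s)) (g s))
          + ∫ s in x₀..u, (Y u ∘L Qp ∘L Ring.inverse (Y s)) (g s))
        (𝓝[>] 0) (𝓝 0)) :=
  solutions_near_singular_point_general n A B x₀ hx₀ Y hYd hYx₀ hYu Qp Qm hQsum C₀ α hC₀ hα hestp
    hestm g m hgcont hgbdd
end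

section
/- Let g : [x₀,∞) → ℝⁿ be continuous and bounded with g(x) → 0 as x → ∞, and let u ∈ ℝⁿ satisfy P₋u = u. Then the function ŷ_u(x) := Y(x;x₀)u + ∫_{x₀}^{x} Y(x;x₀)P₋Y(s;x₀)⁻¹ g(s) ds − ∫_{x}^{∞} Y(x;x₀)P₊Y(s;x₀)⁻¹ g(s) ds is well defined for x ≥ x₀ (the improper integral converges absolutely), solves y′ = (A/x + B(x))y + g(x) on [x₀,∞), and satisfies ŷ_u(x) → 0 as x → ∞. -/
/-!
Variation of constants: for `t ≥ x₀` the candidate is `ŷ_u(t) = Y(t) v(t)` with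
`v(t) = u + ∫_{x₀}^t P₋Y(s)⁻¹g(s) ds - ∫_t^∞ P₊Y(s)⁻¹g(s) ds`, and `v' = (P₋ + P₊)Y⁻¹g = Y⁻¹g`
gives the inhomogeneous equation. By the dichotomy estimates each integrand is bounded by
`C e^{-γ|t-s|} ‖g(s)‖`. Hence the improper integral converges and is at most
`(C/γ) sup_{s ≥ t} ‖g(s)‖`. The integral over `[x₀, t]` is split at a point `T` beyond which
`‖g‖` is small, and the part over `[x₀, T]` carries the factor `e^{-γ(t-T)}`.
-/

open MeasureTheory Set Filter Real
open scoped Topology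

section ExponentialKernel

variable {γ : ℝ}

theorem tendsto_exp_neg_mul_sub_atTop (hγ : 0 < γ) (c : ℝ) :
    Tendsto (fun t => exp (-(γ * (t - c)))) atTop (𝓝 0) :=
  tendsto_exp_neg_atTop_nhds_zero.comp <|
    (tendsto_atTop_add_const_right _ (-c) tendsto_id).const_mul_atTop hγ

theorem exp_neg_mul_sub_eq (γ c s : ℝ) :
    exp (-(γ * (s - c))) = exp (γ * c) * exp (-γ * s) := by
  rw [← exp_add]; ring_nf

theorem integrableOn_exp_neg_mul_sub_Ioi (hγ : 0 < γ) (a c : ℝ) :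
    IntegrableOn (fun s => exp (-(γ * (s - c)))) (Ioi a) := by
  simp_rw [exp_neg_mul_sub_eq]
  exact (exp_neg_integrableOn_Ioi a hγ).const_mul (exp (γ * c))

theorem integral_exp_neg_mul_sub_Ioi (hγ : 0 < γ) (a : ℝ) :
    ∫ s in Ioi a, exp (-(γ * (s - a))) = γ⁻¹ := by
  simp_rw [exp_neg_mul_sub_eq]
  rw [integral_const_mul, integral_exp_mul_Ioi (neg_lt_zero.2 hγ), neg_div_neg_eq, mul_div,
    ← exp_add]
  simp

theorem integral_exp_neg_mul_sub_le (hγ : 0 < γ) (a b : ℝ) :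
    ∫ s in a..b, exp (-(γ * (b - s))) ≤ γ⁻¹ := by
  have hderiv (s : ℝ) :
      HasDerivAt (fun r => exp (-(γ * (b - r))) / γ) (exp (-(γ * (b - s)))) s := by
    refine ((((hasDerivAt_id' s).const_sub b).const_mul γ).fun_neg.exp.div_const γ).congr_deriv ?_
    field_simp
  rw [intervalIntegral.integral_eq_sub_of_hasDerivAt (fun s _ => hderiv s)
    ((by fun_prop : Continuous _).intervalIntegrable _ _)]
  simp only [sub_self, mul_zero, neg_zero, exp_zero, one_div]
  linarith [div_nonneg (exp_pos (-(γ * (b - a)))).le hγ.le]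

variable {E : Type*} [NormedAddCommGroup E]

theorem integrableOn_Ioi_of_norm_le_exp (hγ : 0 < γ) {f : ℝ → E} {t K : ℝ}
    (hf : ContinuousOn f (Ioi t)) (hbound : ∀ s > t, ‖f s‖ ≤ K * exp (-(γ * (s - t)))) :
    IntegrableOn f (Ioi t) := by
  refine Integrable.mono' ((integrableOn_exp_neg_mul_sub_Ioi hγ t t).const_mul K)
    (hf.aestronglyMeasurable measurableSet_Ioi) ?_
  exact (ae_restrict_iff' measurableSet_Ioi).2 (.of_forall hbound)

variable [NormedSpace ℝ E]

theorem norm_integral_Ioi_le_of_norm_le_exp (hγ : 0 < γ) {f : ℝ → E} {t K : ℝ}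
    (hf : ∀ s > t, ‖f s‖ ≤ K * exp (-(γ * (s - t)))) :
    ‖∫ s in Ioi t, f s‖ ≤ K * γ⁻¹ :=
  calc ‖∫ s in Ioi t, f s‖ ≤ ∫ s in Ioi t, K * exp (-(γ * (s - t))) :=
        norm_integral_le_of_norm_le ((integrableOn_exp_neg_mul_sub_Ioi hγ t t).const_mul K)
          ((ae_restrict_iff' measurableSet_Ioi).2 (.of_forall hf))
    _ = K * γ⁻¹ := by rw [integral_const_mul, integral_exp_neg_mul_sub_Ioi hγ]

theorem norm_intervalIntegral_le_of_norm_le_exp (hγ : 0 < γ) {f : ℝ → E} {a b K : ℝ}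
    (hab : a ≤ b) (hK : 0 ≤ K) (hf : ∀ s ∈ Ioc a b, ‖f s‖ ≤ K * exp (-(γ * (b - s)))) :
    ‖∫ s in a..b, f s‖ ≤ K * γ⁻¹ :=
  calc ‖∫ s in a..b, f s‖ ≤ ∫ s in a..b, K * exp (-(γ * (b - s))) :=
        intervalIntegral.norm_integral_le_of_norm_le hab (.of_forall hf)
          ((by fun_prop : Continuous _).intervalIntegrable _ _)
    _ = K * ∫ s in a..b, exp (-(γ * (b - s))) := intervalIntegral.integral_const_mul _ _
    _ ≤ K * γ⁻¹ := mul_le_mul_of_nonneg_left (integral_exp_neg_mul_sub_le hγ a b) hK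

theorem tendsto_integral_Ioi_of_norm_le_exp (hγ : 0 < γ) {f : ℝ → ℝ → E} {h : ℝ → ℝ} {x₀ : ℝ}
    (hh : Tendsto h atTop (𝓝 0))
    (hf : ∀ t s, x₀ ≤ t → t ≤ s → ‖f t s‖ ≤ h s * exp (-(γ * (s - t)))) :
    Tendsto (fun t => ∫ s in Ioi t, f t s) atTop (𝓝 0) := by
  refine NormedAddGroup.tendsto_nhds_zero.2 fun ε hε => ?_
  obtain ⟨N, hN⟩ := eventually_atTop.1 (hh.eventually (gt_mem_nhds (by positivity : 0 < γ * ε / 2)))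
  filter_upwards [eventually_ge_atTop (max N x₀)] with t ht
  have hsmall : ∀ s > t, ‖f t s‖ ≤ γ * ε / 2 * exp (-(γ * (s - t))) := fun s hs =>
    (hf t s (le_of_max_le_right ht) hs.le).trans <| mul_le_mul_of_nonneg_right
      (hN s (le_of_max_le_left (ht.trans hs.le))).le (exp_pos _).le
  calc ‖∫ s in Ioi t, f t s‖ ≤ γ * ε / 2 * γ⁻¹ := norm_integral_Ioi_le_of_norm_le_exp hγ hsmall
    _ < ε := by field_simp; linarith

theorem tendsto_intervalIntegral_of_norm_le_exp (hγ : 0 < γ) {f : ℝ → ℝ → E} {h : ℝ → ℝ}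
    {x₀ M : ℝ} (hh : Tendsto h atTop (𝓝 0)) (hM : ∀ s ≥ x₀, h s ≤ M)
    (hfi : ∀ t ≥ x₀, IntervalIntegrable (f t) volume x₀ t)
    (hf : ∀ t s, x₀ ≤ s → s ≤ t → ‖f t s‖ ≤ h s * exp (-(γ * (t - s)))) :
    Tendsto (fun t => ∫ s in x₀..t, f t s) atTop (𝓝 0) := by
  have hM₀ : 0 ≤ M := by
    have := hf x₀ x₀ le_rfl le_rfl
    simp only [sub_self, mul_zero, neg_zero, exp_zero, mul_one] at this
    linarith [norm_nonneg (f x₀ x₀), hM x₀ le_rfl]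
  refine NormedAddGroup.tendsto_nhds_zero.2 fun ε hε => ?_
  obtain ⟨N, hN⟩ := eventually_atTop.1 (hh.eventually (gt_mem_nhds (by positivity : 0 < γ * ε / 4)))
  set T := max N x₀
  have hfar : ∀ᶠ t in atTop, M * exp (-(γ * (t - T))) * (T - x₀) < ε / 2 := by
    have := ((tendsto_exp_neg_mul_sub_atTop hγ T).const_mul M).mul_const (T - x₀)
    simp only [mul_zero, zero_mul] at this
    exact this.eventually (gt_mem_nhds (by positivity))
  filter_upwards [eventually_ge_atTop T, hfar] with t hTt hfar
  have hx₀T : x₀ ≤ T := le_max_right N x₀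
  have hinit : ‖∫ s in x₀..T, f t s‖ ≤ M * exp (-(γ * (t - T))) * (T - x₀) := by
    have := intervalIntegral.norm_integral_le_of_norm_le_const (f := f t) (a := x₀) (b := T)
      (C := M * exp (-(γ * (t - T)))) fun s hs => by
        rw [uIoc_of_le hx₀T] at hs
        calc ‖f t s‖ ≤ h s * exp (-(γ * (t - s))) := hf t s hs.1.le (hs.2.trans hTt)
          _ ≤ M * exp (-(γ * (t - T))) := by
            gcongr
            · exact hM s hs.1.le
            · exact hs.2
    rwa [abs_of_nonneg (sub_nonneg.2 hx₀T)] at this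
  have htail : ‖∫ s in T..t, f t s‖ ≤ γ * ε / 4 * γ⁻¹ :=
    norm_intervalIntegral_le_of_norm_le_exp hγ hTt (by positivity) fun s hs =>
      (hf t s (hx₀T.trans hs.1.le) hs.2).trans <| mul_le_mul_of_nonneg_right
        (hN s (le_of_max_le_left hs.1.le)).le (exp_pos _).le
  have hTmem : T ∈ uIcc x₀ t := mem_uIcc_of_le hx₀T hTt
  have hsplit := intervalIntegral.integral_add_adjacent_intervals
    ((hfi t (hx₀T.trans hTt)).mono_set (uIcc_subset_uIcc left_mem_uIcc hTmem))
    ((hfi t (hx₀T.trans hTt)).mono_set (uIcc_subset_uIcc hTmem right_mem_uIcc))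
  calc ‖∫ s in x₀..t, f t s‖ ≤ ‖∫ s in x₀..T, f t s‖ + ‖∫ s in T..t, f t s‖ :=
        hsplit ▸ norm_add_le _ _
    _ < ε := by
      have : γ * ε / 4 * γ⁻¹ = ε / 4 := by field_simp
      linarith

end ExponentialKernel

theorem ContinuousOn.ring_inverse {X R : Type*} [TopologicalSpace X] [NormedRing R]
    [HasSummableGeomSeries R] {f : X → R} {S : Set X} (hf : ContinuousOn f S)
    (hu : ∀ x ∈ S, IsUnit (f x)) : ContinuousOn (fun x => Ring.inverse (f x)) S := fun x hx =>
  ((hu x hx).unit_spec ▸ NormedRing.inverse_continuousAt (hu x hx).unit).comp_continuousWithinAt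
    (hf x hx)

section Derivatives

variable {E : Type*} [NormedAddCommGroup E] [NormedSpace ℝ E]

theorem hasDerivWithinAt_variation_of_constants_s9 {Y : ℝ → E →L[ℝ] E} {L : E →L[ℝ] E} {v : ℝ → E}
    {w : E} {S : Set ℝ} {x : ℝ} (hY : HasDerivWithinAt Y (L ∘L Y x) S x) (hYu : IsUnit (Y x))
    (hv : HasDerivWithinAt v (Ring.inverse (Y x) w) S x) :
    HasDerivWithinAt (fun t => Y t (v t)) (L (Y x (v x)) + w) S x := by
  have hw : Y x (Ring.inverse (Y x) w) = w := by
    rw [← mul_apply_eq_comp, Ring.mul_inverse_cancel _ hYu, one_apply_eq_self]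
  simpa [hw] using hY.clm_apply hv

variable [CompleteSpace E]

theorem ContinuousOn.hasDerivWithinAt_intervalIntegral_Ici {f : ℝ → E} {a x : ℝ}
    (hf : ContinuousOn f (Ici a)) (hx : a ≤ x) :
    HasDerivWithinAt (fun t => ∫ s in a..t, f s) (f x) (Ici a) x := by
  have hint : IntervalIntegrable f volume a x :=
    (hf.mono (by rw [uIcc_of_le hx]; exact Icc_subset_Ici_self)).intervalIntegrable
  have hmeas : StronglyMeasurableAtFilter f (𝓝[Ici a] x) :=
    ⟨Ici a, self_mem_nhdsWithin, hf.aestronglyMeasurable measurableSet_Ici⟩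
  rcases hx.eq_or_lt with rfl | hlt
  · exact intervalIntegral.integral_hasDerivWithinAt_right hint
      (hmeas.filter_mono (nhdsWithin_mono _ Ioi_subset_Ici_self))
      ((hf a self_mem_Ici).mono Ioi_subset_Ici_self)
  · have hnhds : Ici a ∈ 𝓝 x := Ici_mem_nhds hlt
    exact (intervalIntegral.integral_hasDerivAt_right hint
      (hmeas.filter_mono (by rw [nhdsWithin_eq_nhds.2 hnhds]))
      ((hf x hx).continuousAt hnhds)).hasDerivWithinAt

theorem ContinuousOn.hasDerivWithinAt_integral_Ioi {f : ℝ → E} {a x : ℝ}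
    (hf : ContinuousOn f (Ici a)) (hfi : IntegrableOn f (Ioi a)) (hx : a ≤ x) :
    HasDerivWithinAt (fun t => ∫ s in Ioi t, f s) (-f x) (Ici a) x := by
  have hsub : ∀ t ∈ Ici a, ∫ s in Ioi t, f s = (∫ s in Ioi a, f s) - ∫ s in a..t, f s :=
    fun t ht => eq_sub_of_add_eq' (intervalIntegral.integral_interval_add_Ioi hfi
      (hfi.mono_set (Ioi_subset_Ioi ht)))
  exact ((hf.hasDerivWithinAt_intervalIntegral_Ici hx).const_sub _).congr hsub (hsub x hx)

end Derivatives

section BoundedSolution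

variable {E : Type*} [NormedAddCommGroup E] [NormedSpace ℝ E]

noncomputable def boundedSolution (Y : ℝ → E →L[ℝ] E) (Pm Pp : E →L[ℝ] E) (g : ℝ → E) (x₀ : ℝ)
    (u : E) (t : ℝ) : E :=
  Y t u + (∫ s in x₀..t, (Y t ∘L Pm ∘L Ring.inverse (Y s)) (g s))
    - ∫ s in Ioi t, (Y t ∘L Pp ∘L Ring.inverse (Y s)) (g s)

variable {Y : ℝ → E →L[ℝ] E} {Pm Pp : E →L[ℝ] E} {g : ℝ → E} {x₀ : ℝ}

theorem tendsto_apply_atTop_of_dichotomy {C γ : ℝ} (hγ : 0 < γ) (hYx₀ : Y x₀ = 1)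
    (hest : ∀ x s, x₀ ≤ s → s ≤ x → ‖Y x ∘L Pm ∘L Ring.inverse (Y s)‖ ≤ C * exp (-(γ * (x - s))))
    {u : E} (hu : Pm u = u) : Tendsto (fun t => Y t u) atTop (𝓝 0) := by
  have hlim := ((tendsto_exp_neg_mul_sub_atTop hγ x₀).const_mul C).mul_const ‖u‖
  rw [mul_zero, zero_mul] at hlim
  refine squeeze_zero_norm' ?_ hlim
  filter_upwards [eventually_ge_atTop x₀] with t ht
  have hYtu : Y t u = (Y t ∘L Pm ∘L Ring.inverse (Y x₀)) u := by
    simp [hYx₀, hu]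
  exact hYtu ▸ (Y t ∘L Pm ∘L Ring.inverse (Y x₀)).le_of_opNorm_le (hest t x₀ le_rfl ht) u

variable [CompleteSpace E]

theorem continuousOn_inverse_apply (hY : ContinuousOn Y (Ici x₀))
    (hYu : ∀ x ≥ x₀, IsUnit (Y x)) (hg : ContinuousOn g (Ici x₀)) :
    ContinuousOn (fun s => Ring.inverse (Y s) (g s)) (Ici x₀) :=
  (hY.ring_inverse hYu).clm_apply hg

theorem integrableOn_Ioi_of_dichotomy {P : E →L[ℝ] E} {C γ M x : ℝ} (hγ : 0 < γ)
    (hY : ContinuousOn Y (Ici x₀)) (hYu : ∀ x ≥ x₀, IsUnit (Y x))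
    (hg : ContinuousOn g (Ici x₀)) (hM : ∀ s ≥ x₀, ‖g s‖ ≤ M)
    (hest : ∀ x s, x₀ ≤ x → x ≤ s → ‖Y x ∘L P ∘L Ring.inverse (Y s)‖ ≤ C * exp (-(γ * (s - x))))
    (hx : x₀ ≤ x) :
    IntegrableOn (fun s => (Y x ∘L P ∘L Ring.inverse (Y s)) (g s)) (Ioi x) := by
  refine integrableOn_Ioi_of_norm_le_exp (K := C * M) hγ ?_ fun s hs => ?_
  · exact ((Y x ∘L P).continuous.comp_continuousOn (continuousOn_inverse_apply hY hYu hg)).mono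
      fun s hs => hx.trans (le_of_lt hs)
  · calc _ ≤ C * exp (-(γ * (s - x))) * M :=
          (Y x ∘L P ∘L Ring.inverse (Y s)).le_of_opNorm_le_of_le (hest x s hx hs.le)
            (hM s (hx.trans hs.le))
      _ = C * M * exp (-(γ * (s - x))) := by ring

theorem boundedSolution_eq_apply (hY : ContinuousOn Y (Ici x₀)) (hYu : ∀ x ≥ x₀, IsUnit (Y x))
    (hg : ContinuousOn g (Ici x₀))
    (hint : IntegrableOn (fun s => (Pp ∘L Ring.inverse (Y s)) (g s)) (Ioi x₀)) (u : E) {t : ℝ}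
    (ht : x₀ ≤ t) :
    boundedSolution Y Pm Pp g x₀ u t = Y t (u + (∫ s in x₀..t, (Pm ∘L Ring.inverse (Y s)) (g s))
      - ∫ s in Ioi t, (Pp ∘L Ring.inverse (Y s)) (g s)) := by
  have hintm : IntervalIntegrable (fun s => (Pm ∘L Ring.inverse (Y s)) (g s)) volume x₀ t :=
    ((Pm.continuous.comp_continuousOn (continuousOn_inverse_apply hY hYu hg)).mono
      (by rw [uIcc_of_le ht]; exact Icc_subset_Ici_self)).intervalIntegrable
  rw [map_sub, map_add, ← (Y t).intervalIntegral_comp_comm hintm,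
    ← (Y t).integral_comp_comm (hint.mono_set (Ioi_subset_Ioi ht))]
  rfl

theorem hasDerivWithinAt_boundedSolution {L : ℝ → E →L[ℝ] E}
    (hY : ∀ x ≥ x₀, HasDerivWithinAt Y (L x ∘L Y x) (Ici x₀) x) (hYu : ∀ x ≥ x₀, IsUnit (Y x))
    (hP : Pm + Pp = 1) (hg : ContinuousOn g (Ici x₀))
    (hint : IntegrableOn (fun s => (Pp ∘L Ring.inverse (Y s)) (g s)) (Ioi x₀)) (u : E) {x : ℝ}
    (hx : x₀ ≤ x) :
    HasDerivWithinAt (boundedSolution Y Pm Pp g x₀ u)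
      (L x (boundedSolution Y Pm Pp g x₀ u x) + g x) (Ici x₀) x := by
  have hYc : ContinuousOn Y (Ici x₀) := fun x hx => (hY x hx).continuousWithinAt
  have hZg := continuousOn_inverse_apply hYc hYu hg
  have hv : HasDerivWithinAt (fun t => u + (∫ s in x₀..t, (Pm ∘L Ring.inverse (Y s)) (g s))
      - ∫ s in Ioi t, (Pp ∘L Ring.inverse (Y s)) (g s)) (Ring.inverse (Y x) (g x)) (Ici x₀) x := by
    have hcm : ContinuousOn (fun s => (Pm ∘L Ring.inverse (Y s)) (g s)) (Ici x₀) :=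
      Pm.continuous.comp_continuousOn hZg
    have hcp : ContinuousOn (fun s => (Pp ∘L Ring.inverse (Y s)) (g s)) (Ici x₀) :=
      Pp.continuous.comp_continuousOn hZg
    refine (((hcm.hasDerivWithinAt_intervalIntegral_Ici hx).const_add u).fun_sub
      (hcp.hasDerivWithinAt_integral_Ioi hint hx)).congr_deriv ?_
    rw [sub_neg_eq_add, ← add_apply, ← ContinuousLinearMap.add_comp, hP,
      ContinuousLinearMap.one_def, ContinuousLinearMap.id_comp]
  have heq : ∀ t ∈ Ici x₀, boundedSolution Y Pm Pp g x₀ u t = _ :=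
    fun t ht => boundedSolution_eq_apply hYc hYu hg hint u ht
  rw [heq x hx]
  exact (hasDerivWithinAt_variation_of_constants_s9 (hY x hx) (hYu x hx) hv).congr heq (heq x hx)

theorem tendsto_boundedSolution_atTop {C γ M : ℝ} (hC : 0 ≤ C) (hγ : 0 < γ) (hYx₀ : Y x₀ = 1)
    (hY : ContinuousOn Y (Ici x₀)) (hYu : ∀ x ≥ x₀, IsUnit (Y x))
    (hestm : ∀ x s, x₀ ≤ s → s ≤ x → ‖Y x ∘L Pm ∘L Ring.inverse (Y s)‖ ≤ C * exp (-(γ * (x - s))))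
    (hestp : ∀ x s, x₀ ≤ x → x ≤ s → ‖Y x ∘L Pp ∘L Ring.inverse (Y s)‖ ≤ C * exp (-(γ * (s - x))))
    (hg : ContinuousOn g (Ici x₀)) (hM : ∀ s ≥ x₀, ‖g s‖ ≤ M) (hg₀ : Tendsto g atTop (𝓝 0))
    {u : E} (hu : Pm u = u) :
    Tendsto (boundedSolution Y Pm Pp g x₀ u) atTop (𝓝 0) := by
  have hCg : Tendsto (fun s => C * ‖g s‖) atTop (𝓝 0) := by
    simpa using (tendsto_norm_zero.comp hg₀).const_mul C
  have hhead := tendsto_intervalIntegral_of_norm_le_exp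
    (f := fun t s => (Y t ∘L Pm ∘L Ring.inverse (Y s)) (g s)) hγ hCg
    (fun s hs => mul_le_mul_of_nonneg_left (hM s hs) hC)
    (fun t ht => (((Y t ∘L Pm).continuous.comp_continuousOn
      (continuousOn_inverse_apply hY hYu hg)).mono
      (by rw [uIcc_of_le ht]; exact Icc_subset_Ici_self)).intervalIntegrable)
    fun t s hs hst => ((Y t ∘L Pm ∘L Ring.inverse (Y s)).le_of_opNorm_le
      (hestm t s hs hst) (g s)).trans_eq (by ring)
  have htail := tendsto_integral_Ioi_of_norm_le_exp hγ hCg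
    fun t s ht hts => ((Y t ∘L Pp ∘L Ring.inverse (Y s)).le_of_opNorm_le
      (hestp t s ht hts) (g s)).trans_eq (by ring)
  have := ((tendsto_apply_atTop_of_dichotomy hγ hYx₀ hestm hu).add hhead).sub htail
  rwa [add_zero, sub_zero] at this

end BoundedSolution

theorem bounded_solutions_at_infinity_general (n : ℕ)
    (A : EuclideanSpace ℝ (Fin n) →L[ℝ] EuclideanSpace ℝ (Fin n))
    (B : ℝ → EuclideanSpace ℝ (Fin n) →L[ℝ] EuclideanSpace ℝ (Fin n))
    (x₀ : ℝ) (hx₀ : 0 < x₀)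
    -- the evolution operator Y(·;x₀)
    (Y : ℝ → EuclideanSpace ℝ (Fin n) →L[ℝ] EuclideanSpace ℝ (Fin n))
    (hYd : ∀ x > (0 : ℝ), HasDerivAt Y ((x⁻¹ • A + B x) ∘L Y x) x)
    (hYx₀ : Y x₀ = 1) (hYu : ∀ x > (0 : ℝ), IsUnit (Y x))
    -- the projectors P₋, P₊
    (Pm Pp : EuclideanSpace ℝ (Fin n) →L[ℝ] EuclideanSpace ℝ (Fin n))
    (hPsum : Pm + Pp = 1)
    -- the exponential dichotomy estimates
    (Cs γ : ℝ) (hCs : 0 < Cs) (hγ : 0 < γ)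
    (hestm : ∀ x s : ℝ, x₀ ≤ s → s ≤ x →
      ‖Y x ∘L Pm ∘L Ring.inverse (Y s)‖ ≤ Cs * Real.exp (-(γ * (x - s))))
    (hestp : ∀ x s : ℝ, x₀ ≤ x → x ≤ s →
      ‖Y x ∘L Pp ∘L Ring.inverse (Y s)‖ ≤ Cs * Real.exp (-(γ * (s - x))))
    -- the inhomogeneity g
    (g : ℝ → EuclideanSpace ℝ (Fin n))
    (hgcont : ContinuousOn g (Set.Ici x₀)) (hgbdd : ∃ M, ∀ x ≥ x₀, ‖g x‖ ≤ M)
    (hg0 : Tendsto g atTop (𝓝 0))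
    (u : EuclideanSpace ℝ (Fin n)) (hu : Pm u = u) :
    -- (i) the improper integral converges absolutely
    (∀ x ≥ x₀,
      IntegrableOn (fun s => (Y x ∘L Pp ∘L Ring.inverse (Y s)) (g s)) (Set.Ioi x)) ∧
    -- (ii) ŷ_u solves the non-homogeneous system on [x₀, ∞)
    (∀ x ∈ Set.Ici x₀,
      HasDerivWithinAt
        (fun t => Y t u + (∫ s in x₀..t, (Y t ∘L Pm ∘L Ring.inverse (Y s)) (g s))
          - ∫ s in Set.Ioi t, (Y t ∘L Pp ∘L Ring.inverse (Y s)) (g s))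
        (x⁻¹ • A (Y x u + (∫ s in x₀..x, (Y x ∘L Pm ∘L Ring.inverse (Y s)) (g s))
            - ∫ s in Set.Ioi x, (Y x ∘L Pp ∘L Ring.inverse (Y s)) (g s))
          + B x (Y x u + (∫ s in x₀..x, (Y x ∘L Pm ∘L Ring.inverse (Y s)) (g s))
            - ∫ s in Set.Ioi x, (Y x ∘L Pp ∘L Ring.inverse (Y s)) (g s))
          + g x)
        (Set.Ici x₀) x) ∧
    -- (iii) ŷ_u(x) → 0 as x → ∞
    Tendsto
      (fun t => Y t u + (∫ s in x₀..t, (Y t ∘L Pm ∘L Ring.inverse (Y s)) (g s))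
        - ∫ s in Set.Ioi t, (Y t ∘L Pp ∘L Ring.inverse (Y s)) (g s))
      atTop (𝓝 0) := by
  obtain ⟨M, hM⟩ := hgbdd
  have hYd' : ∀ x ≥ x₀, HasDerivWithinAt Y ((x⁻¹ • A + B x) ∘L Y x) (Ici x₀) x :=
    fun x hx => (hYd x (hx₀.trans_le hx)).hasDerivWithinAt
  have hYc : ContinuousOn Y (Ici x₀) := fun x hx => (hYd' x hx).continuousWithinAt
  have hYu' : ∀ x ≥ x₀, IsUnit (Y x) := fun x hx => hYu x (hx₀.trans_le hx)
  have hint : ∀ x ≥ x₀, IntegrableOn (fun s => (Y x ∘L Pp ∘L Ring.inverse (Y s)) (g s)) (Ioi x) :=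
    fun x hx => integrableOn_Ioi_of_dichotomy hγ hYc hYu' hgcont hM hestp hx
  refine ⟨hint, fun x hx => ?_,
    tendsto_boundedSolution_atTop hCs.le hγ hYx₀ hYc hYu' hestm hestp hgcont hM hg0 hu⟩
  have hint₀ : IntegrableOn (fun s => (Pp ∘L Ring.inverse (Y s)) (g s)) (Ioi x₀) := by
    simpa [hYx₀] using hint x₀ le_rfl
  have hderiv := hasDerivWithinAt_boundedSolution hYd' hYu' hPsum hgcont hint₀ u hx
  rw [add_apply, smul_apply] at hderiv
  exact hderiv

/-- on `[x₀, ∞)`, for `u` with `P₋ u = u`, the function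
`ŷ_u(x) = Y(x;x₀) u + ∫_{x₀}^x Y(x;x₀) P₋ Y(s;x₀)⁻¹ g(s) ds − ∫_x^∞ Y(x;x₀) P₊ Y(s;x₀)⁻¹ g(s) ds`
is well defined, solves `y' = (A/x + B(x)) y + g(x)`, and tends to `0` as `x → ∞`. -/
theorem bounded_solutions_at_infinity (n : ℕ)
    (A : EuclideanSpace ℝ (Fin n) →L[ℝ] EuclideanSpace ℝ (Fin n))
    (B : ℝ → EuclideanSpace ℝ (Fin n) →L[ℝ] EuclideanSpace ℝ (Fin n))
    (hBcont : ContinuousOn B (Set.Ioi 0)) (hBbdd : ∃ M, ∀ x > (0 : ℝ), ‖B x‖ ≤ M)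
    (x₀ : ℝ) (hx₀ : 0 < x₀)
    -- the evolution operator Y(·;x₀)
    (Y : ℝ → EuclideanSpace ℝ (Fin n) →L[ℝ] EuclideanSpace ℝ (Fin n))
    (hYd : ∀ x > (0 : ℝ), HasDerivAt Y ((x⁻¹ • A + B x) ∘L Y x) x)
    (hYx₀ : Y x₀ = 1) (hYu : ∀ x > (0 : ℝ), IsUnit (Y x))
    -- the projectors P₋, P₊
    (Pm Pp : EuclideanSpace ℝ (Fin n) →L[ℝ] EuclideanSpace ℝ (Fin n))
    (hPm : Pm ∘L Pm = Pm) (hPp : Pp ∘L Pp = Pp) (hPsum : Pm + Pp = 1)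
    (hPmp : Pm ∘L Pp = 0) (hPpm : Pp ∘L Pm = 0)
    -- the exponential dichotomy estimates
    (Cs γ : ℝ) (hCs : 0 < Cs) (hγ : 0 < γ)
    (hestm : ∀ x s : ℝ, x₀ ≤ s → s ≤ x →
      ‖Y x ∘L Pm ∘L Ring.inverse (Y s)‖ ≤ Cs * Real.exp (-(γ * (x - s))))
    (hestp : ∀ x s : ℝ, x₀ ≤ x → x ≤ s →
      ‖Y x ∘L Pp ∘L Ring.inverse (Y s)‖ ≤ Cs * Real.exp (-(γ * (s - x))))
    -- the inhomogeneity g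
    (g : ℝ → EuclideanSpace ℝ (Fin n))
    (hgcont : ContinuousOn g (Set.Ici x₀)) (hgbdd : ∃ M, ∀ x ≥ x₀, ‖g x‖ ≤ M)
    (hg0 : Tendsto g atTop (𝓝 0))
    (u : EuclideanSpace ℝ (Fin n)) (hu : Pm u = u) :
    -- (i) the improper integral converges absolutely
    (∀ x ≥ x₀,
      IntegrableOn (fun s => (Y x ∘L Pp ∘L Ring.inverse (Y s)) (g s)) (Set.Ioi x)) ∧
    -- (ii) ŷ_u solves the non-homogeneous system on [x₀, ∞)
    (∀ x ∈ Set.Ici x₀,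
      HasDerivWithinAt
        (fun t => Y t u + (∫ s in x₀..t, (Y t ∘L Pm ∘L Ring.inverse (Y s)) (g s))
          - ∫ s in Set.Ioi t, (Y t ∘L Pp ∘L Ring.inverse (Y s)) (g s))
        (x⁻¹ • A (Y x u + (∫ s in x₀..x, (Y x ∘L Pm ∘L Ring.inverse (Y s)) (g s))
            - ∫ s in Set.Ioi x, (Y x ∘L Pp ∘L Ring.inverse (Y s)) (g s))
          + B x (Y x u + (∫ s in x₀..x, (Y x ∘L Pm ∘L Ring.inverse (Y s)) (g s))
            - ∫ s in Set.Ioi x, (Y x ∘L Pp ∘L Ring.inverse (Y s)) (g s))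
          + g x)
        (Set.Ici x₀) x) ∧
    -- (iii) ŷ_u(x) → 0 as x → ∞
    Tendsto
      (fun t => Y t u + (∫ s in x₀..t, (Y t ∘L Pm ∘L Ring.inverse (Y s)) (g s))
        - ∫ s in Set.Ioi t, (Y t ∘L Pp ∘L Ring.inverse (Y s)) (g s))
      atTop (𝓝 0) :=
  bounded_solutions_at_infinity_general n A B x₀ hx₀ Y hYd hYx₀ hYu Pm Pp hPsum Cs γ hCs hγ hestm
    hestp g hgcont hgbdd hg0 u hu
end
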